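/- arXiv:2208.06514 — 14 statements merged into one kernel-verified Lean document; each statement's English description precedes it below -/
import Mathlib

section
/- Let T > 0 and let λ, x, y : [0,T) → ℝ be differentiable functions solving the Wang ODE system, with y(t) > 0 for all t ∈ [0,T). Then the quantities x(t)/y(t)³ and λ(t) + (4/3)·x(t) are constant on [0,T); that is, for all t ∈ [0,T) one has x(t)/y(t)³ = x(0)/y(0)³ and λ(t) + (4/3)·x(t) = λ(0) + (4/3)·x(0). -/
open Set

/-! Along the flow `x' = 3·c·x` and `y' = c·y` with the common factor `c = -2/(x² + y²)`, so
`x/y³` has zero derivative; likewise `λ' = -(4/3)·x'`. A function with zero derivative on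
`[0,T)` is constant there. -/

theorem eq_of_hasDerivAt_zero_on_Ico {f : ℝ → ℝ} {a b t : ℝ}
    (hf : ∀ s ∈ Ico a b, HasDerivAt f 0 s) (ht : t ∈ Ico a b) : f t = f a := by
  have hsub : Icc a t ⊆ Ico a b := Icc_subset_Ico_right ht.2
  have hcont : ContinuousOn f (Icc a t) := fun s hs =>
    (hf s (hsub hs)).continuousAt.continuousWithinAt
  exact constant_of_has_deriv_right_zero hcont
    (fun s hs => (hf s (hsub (Ico_subset_Icc_self hs))).hasDerivWithinAt) t
    (right_mem_Icc.mpr ht.1)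

theorem hasDerivAt_div_pow_zero {x y : ℝ → ℝ} {c t : ℝ} (n : ℕ)
    (hx : HasDerivAt x (n * c * x t) t) (hy : HasDerivAt y (c * y t) t) (hyt : y t ≠ 0) :
    HasDerivAt (fun s => x s / y s ^ n) 0 t := by
  refine (hx.fun_div (hy.fun_pow n) (pow_ne_zero n hyt)).congr_deriv ?_
  rcases n with _ | n
  · simp
  · simp only [Nat.add_sub_cancel]
    ring

theorem wang_ode_conserved_general (T : ℝ) (lam x y : ℝ → ℝ)
    (hypos : ∀ t ∈ Ico (0:ℝ) T, 0 < y t)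
    (hlam : ∀ t ∈ Ico (0:ℝ) T,
      HasDerivAt lam (8 * x t / (x t ^ 2 + y t ^ 2)) t)
    (hx : ∀ t ∈ Ico (0:ℝ) T,
      HasDerivAt x (-6 * x t / (x t ^ 2 + y t ^ 2)) t)
    (hy : ∀ t ∈ Ico (0:ℝ) T,
      HasDerivAt y (-2 * y t / (x t ^ 2 + y t ^ 2)) t) :
    ∀ t ∈ Ico (0:ℝ) T,
      x t / (y t) ^ 3 = x 0 / (y 0) ^ 3 ∧
      lam t + (4/3) * x t = lam 0 + (4/3) * x 0 := by
  intro t ht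
  have hratio : ∀ s ∈ Ico (0:ℝ) T, HasDerivAt (fun s => x s / y s ^ 3) 0 s := fun s hs =>
    hasDerivAt_div_pow_zero (c := -2 / (x s ^ 2 + y s ^ 2)) 3
      ((hx s hs).congr_deriv (by push_cast; ring)) ((hy s hs).congr_deriv (by ring))
      (hypos s hs).ne'
  have hdrift : ∀ s ∈ Ico (0:ℝ) T, HasDerivAt (fun s => lam s + (4/3) * x s) 0 s := fun s hs =>
    ((hlam s hs).fun_add ((hx s hs).const_mul (4/3))).congr_deriv (by ring)
  exact ⟨eq_of_hasDerivAt_zero_on_Ico hratio ht, eq_of_hasDerivAt_zero_on_Ico hdrift ht⟩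

/-- Conservation laws for the Wang ODE system: if `λ, x, y` solve
`λ' = 8x/(x²+y²)`, `x' = −6x/(x²+y²)`, `y' = −2y/(x²+y²)` on `[0,T)` with `y > 0`,
then `x/y³` and `λ + (4/3)x` are constant on `[0,T)`. -/
theorem wang_ode_conserved (T : ℝ) (hT : 0 < T) (lam x y : ℝ → ℝ)
    (hypos : ∀ t ∈ Ico (0:ℝ) T, 0 < y t)
    (hlam : ∀ t ∈ Ico (0:ℝ) T,
      HasDerivAt lam (8 * x t / (x t ^ 2 + y t ^ 2)) t)
    (hx : ∀ t ∈ Ico (0:ℝ) T,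
      HasDerivAt x (-6 * x t / (x t ^ 2 + y t ^ 2)) t)
    (hy : ∀ t ∈ Ico (0:ℝ) T,
      HasDerivAt y (-2 * y t / (x t ^ 2 + y t ^ 2)) t) :
    ∀ t ∈ Ico (0:ℝ) T,
      x t / (y t) ^ 3 = x 0 / (y 0) ^ 3 ∧
      lam t + (4/3) * x t = lam 0 + (4/3) * x 0 :=
  wang_ode_conserved_general T lam x y hypos hlam hx hy
end

section
/- Let T > 0 and let λ, x, y : [0,T] → ℝ be differentiable functions solving the Wang ODE system, with y(t) > 0 for all t ∈ [0,T]. Then the Loewner energy expelled up to time T satisfies (1/2)·∫₀ᵀ λ'(t)² dt = 8·log( y(T)/√(x(T)²+y(T)²) ) − 8·log( y(0)/√(x(0)²+y(0)²) ). In particular, if x(0) = cos θ and y(0) = sin θ for θ ∈ (0,π), the energy used up to time T equals −8·log(sin θ) + 8·log(sin θ(T)) where θ(T) = arg(x(T)+iy(T)). -/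
/-!
Along the flow, `16 log (y / √(x² + y²)) = 16 log (sin arg (x + i y))` is a potential for the
energy density: differentiating it with the Wang equations gives exactly `λ'² = 64 x² / (x² + y²)²`.
The energy is therefore the increment of this potential, by the fundamental theorem of calculus;
a nonnegative derivative is automatically integrable.
-/

open Set Real

theorem intervalIntegral.integral_eq_sub_of_hasDerivAt_of_nonneg {f f' : ℝ → ℝ} {a b : ℝ}
    (hderiv : ∀ t ∈ uIcc a b, HasDerivAt f (f' t) t) (hpos : ∀ t ∈ uIcc a b, 0 ≤ f' t) :
    ∫ t in a..b, f' t = f b - f a :=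
  integral_eq_sub_of_hasDerivAt hderiv <|
    intervalIntegrable_deriv_of_nonneg (HasDerivAt.continuousOn hderiv)
      (fun t ht => hderiv t (Ioo_subset_Icc_self ht)) (fun t ht => hpos t (Ioo_subset_Icc_self ht))

theorem Complex.sin_arg_ofReal_add_ofReal_mul_I (a b : ℝ) :
    Real.sin (Complex.arg (a + b * Complex.I)) = b / √(a ^ 2 + b ^ 2) := by
  rw [Complex.sin_arg, Complex.norm_add_mul_I]
  simp

theorem log_div_sqrt_sq_add_sq {a b : ℝ} (hb : 0 < b) :
    log (b / √(a ^ 2 + b ^ 2)) = log b - log (a ^ 2 + b ^ 2) / 2 := by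
  have hr : 0 < a ^ 2 + b ^ 2 := by positivity
  rw [log_div hb.ne' (sqrt_pos.2 hr).ne', log_sqrt hr.le]

section WangFlow

variable {x y : ℝ → ℝ} {t : ℝ}

theorem hasDerivAt_log_sub_half_log_sq_add_sq {x' y' : ℝ} (hyt : 0 < y t)
    (hx : HasDerivAt x x' t) (hy : HasDerivAt y y' t) :
    HasDerivAt (fun s => log (y s) - log (x s ^ 2 + y s ^ 2) / 2)
      (y' / y t - (x t * x' + y t * y') / (x t ^ 2 + y t ^ 2)) t := by
  have hr : x t ^ 2 + y t ^ 2 ≠ 0 := by positivity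
  have hsq : HasDerivAt (fun s => x s ^ 2 + y s ^ 2) (2 * x t * x' + 2 * y t * y') t :=
    ((hx.fun_pow 2).fun_add (hy.fun_pow 2)).congr_deriv (by push_cast; ring)
  refine ((hy.log hyt.ne').sub ((hsq.log hr).div_const 2)).congr_deriv ?_
  field_simp

theorem hasDerivAt_wang_energy_potential (hyt : 0 < y t)
    (hx : HasDerivAt x (-6 * x t / (x t ^ 2 + y t ^ 2)) t)
    (hy : HasDerivAt y (-2 * y t / (x t ^ 2 + y t ^ 2)) t) :
    HasDerivAt (fun s => 16 * (log (y s) - log (x s ^ 2 + y s ^ 2) / 2))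
      ((8 * x t / (x t ^ 2 + y t ^ 2)) ^ 2) t := by
  have hr : x t ^ 2 + y t ^ 2 ≠ 0 := by positivity
  refine ((hasDerivAt_log_sub_half_log_sq_add_sq hyt hx hy).const_mul 16).congr_deriv ?_
  field_simp
  ring

end WangFlow

/-- Energy formula for the Wang ODE system: the Loewner energy
expelled up to time `T` is `8 log(y(T)/√(x(T)²+y(T)²)) − 8 log(y(0)/√(x(0)²+y(0)²))`.
In particular, with initial data `(cos θ, sin θ)`, this energy equals
`−8 log(sin θ) + 8 log(sin θ(T))` where `θ(T) = arg(x(T)+iy(T))`. -/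
theorem wang_ode_energy (T : ℝ) (hT : 0 < T) (lam x y : ℝ → ℝ)
    (hypos : ∀ t ∈ Icc (0:ℝ) T, 0 < y t)
    (hlam : ∀ t ∈ Icc (0:ℝ) T,
      HasDerivAt lam (8 * x t / (x t ^ 2 + y t ^ 2)) t)
    (hx : ∀ t ∈ Icc (0:ℝ) T,
      HasDerivAt x (-6 * x t / (x t ^ 2 + y t ^ 2)) t)
    (hy : ∀ t ∈ Icc (0:ℝ) T,
      HasDerivAt y (-2 * y t / (x t ^ 2 + y t ^ 2)) t) :
    (1/2) * (∫ t in (0:ℝ)..T, (deriv lam t) ^ 2) =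
        8 * Real.log (y T / Real.sqrt (x T ^ 2 + y T ^ 2)) -
        8 * Real.log (y 0 / Real.sqrt (x 0 ^ 2 + y 0 ^ 2)) ∧
      ∀ θ ∈ Ioo (0:ℝ) Real.pi, x 0 = Real.cos θ → y 0 = Real.sin θ →
        (1/2) * (∫ t in (0:ℝ)..T, (deriv lam t) ^ 2) =
          -8 * Real.log (Real.sin θ) +
          8 * Real.log (Real.sin (Complex.arg ((x T : ℂ) + (y T : ℂ) * Complex.I))) := by
  have hpotential : ∀ t ∈ uIcc 0 T, HasDerivAt
      (fun s => 16 * (log (y s) - log (x s ^ 2 + y s ^ 2) / 2)) (deriv lam t ^ 2) t := by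
    intro t ht
    rw [uIcc_of_le hT.le] at ht
    rw [(hlam t ht).deriv]
    exact hasDerivAt_wang_energy_potential (hypos t ht) (hx t ht) (hy t ht)
  have henergy : (1/2) * (∫ t in (0:ℝ)..T, (deriv lam t) ^ 2) =
      8 * log (y T / √(x T ^ 2 + y T ^ 2)) - 8 * log (y 0 / √(x 0 ^ 2 + y 0 ^ 2)) := by
    rw [intervalIntegral.integral_eq_sub_of_hasDerivAt_of_nonneg hpotential
        (fun t _ => sq_nonneg _),
      log_div_sqrt_sq_add_sq (hypos T ⟨hT.le, le_rfl⟩),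
      log_div_sqrt_sq_add_sq (hypos 0 ⟨le_rfl, hT.le⟩)]
    ring
  refine ⟨henergy, fun θ _ hx0 hy0 => ?_⟩
  rw [henergy, Complex.sin_arg_ofReal_add_ofReal_mul_I, hx0, hy0, cos_sq_add_sin_sq, sqrt_one,
    div_one]
  ring
end

section
/- Fix θ ∈ (0, π/2), set b = cos θ / sin³θ and τ = (1/6)·(1 − (1/2)·cos 2θ). Suppose λ, x, y : [0,τ) → ℝ solve the Wang ODE system with λ(0) = 0, x(0) = cos θ, y(0) = sin θ, and y(t) > 0 for all t. Then for every t ∈ [0,τ): x(t) = b·y(t)³, λ(t) = (4/3)·cos θ − (4/3)·x(t), and (b²/6)·y(t)⁶ + (1/2)·y(t)² = −2t + (1/6)·cos²θ + (1/2)·sin²θ. -/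
open Set

/-!
Along a solution of the Wang system `x' y = 3 x y'` and `λ' = -(4/3) x'`, so `x / y³` and
`λ + (4/3) x` are conserved. With `x = b y³` we get `x² + y² = b² y⁶ + y²`, so
`((b²/6) y⁶ + y²/2)' = (b² y⁶ + y²) · (-2 / (x² + y²)) = -2`.
-/

lemma eq_of_hasDerivAt_eq_zero_on_Ico {f : ℝ → ℝ} {a b : ℝ}
    (hf : ∀ s ∈ Ico a b, HasDerivAt f 0 s) {t : ℝ} (ht : t ∈ Ico a b) : f t = f a := by
  have hsub : Icc a t ⊆ Ico a b := Icc_subset_Ico_right ht.2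
  exact constant_of_has_deriv_right_zero
    (fun s hs => (hf s (hsub hs)).continuousAt.continuousWithinAt)
    (fun s hs => (hf s (hsub (Ico_subset_Icc_self hs))).hasDerivWithinAt)
    t (right_mem_Icc.mpr ht.1)

structure WangSolution (τ : ℝ) (lam x y : ℝ → ℝ) : Prop where
  y_pos : ∀ t ∈ Ico (0:ℝ) τ, 0 < y t
  hasDerivAt_lam : ∀ t ∈ Ico (0:ℝ) τ, HasDerivAt lam (8 * x t / (x t ^ 2 + y t ^ 2)) t
  hasDerivAt_x : ∀ t ∈ Ico (0:ℝ) τ, HasDerivAt x (-6 * x t / (x t ^ 2 + y t ^ 2)) t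
  hasDerivAt_y : ∀ t ∈ Ico (0:ℝ) τ, HasDerivAt y (-2 * y t / (x t ^ 2 + y t ^ 2)) t

namespace WangSolution

variable {τ : ℝ} {lam x y : ℝ → ℝ} (h : WangSolution τ lam x y) {t : ℝ}
include h

lemma sq_add_sq_pos (ht : t ∈ Ico (0:ℝ) τ) : 0 < x t ^ 2 + y t ^ 2 := by
  have := h.y_pos t ht
  positivity

lemma x_eq (ht : t ∈ Ico (0:ℝ) τ) : x t = x 0 / y 0 ^ 3 * y t ^ 3 := by
  have hconst : x t / y t ^ 3 = x 0 / y 0 ^ 3 := by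
    refine eq_of_hasDerivAt_eq_zero_on_Ico (f := fun s => x s / y s ^ 3) (fun s hs => ?_) ht
    have hy3 : y s ^ 3 ≠ 0 := pow_ne_zero 3 (h.y_pos s hs).ne'
    have hS := (h.sq_add_sq_pos hs).ne'
    refine ((h.hasDerivAt_x s hs).div ((h.hasDerivAt_y s hs).pow 3) hy3).congr_deriv ?_
    simp only [Pi.pow_apply]
    field_simp
    ring
  rw [← hconst, div_mul_cancel₀ _ (pow_ne_zero 3 (h.y_pos t ht).ne')]

lemma lam_eq (ht : t ∈ Ico (0:ℝ) τ) : lam t = lam 0 + 4/3 * x 0 - 4/3 * x t := by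
  have hconst : lam t + 4/3 * x t = lam 0 + 4/3 * x 0 := by
    refine eq_of_hasDerivAt_eq_zero_on_Ico (f := fun s => lam s + 4/3 * x s) (fun s hs => ?_) ht
    have hS := (h.sq_add_sq_pos hs).ne'
    refine ((h.hasDerivAt_lam s hs).add ((h.hasDerivAt_x s hs).const_mul (4/3))).congr_deriv ?_
    field_simp
    ring
  linarith

lemma energy_eq (ht : t ∈ Ico (0:ℝ) τ) :
    (x 0 / y 0 ^ 3) ^ 2 / 6 * y t ^ 6 + 1/2 * y t ^ 2 = -2 * t + 1/6 * x 0 ^ 2 + 1/2 * y 0 ^ 2 := by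
  set b := x 0 / y 0 ^ 3
  have hconst : b ^ 2 / 6 * y t ^ 6 + 1/2 * y t ^ 2 + 2 * t =
      b ^ 2 / 6 * y 0 ^ 6 + 1/2 * y 0 ^ 2 + 2 * 0 := by
    refine eq_of_hasDerivAt_eq_zero_on_Ico
      (f := fun s => b ^ 2 / 6 * y s ^ 6 + 1/2 * y s ^ 2 + 2 * s) (fun s hs => ?_) ht
    have hy := h.hasDerivAt_y s hs
    have hS : x s ^ 2 + y s ^ 2 = b ^ 2 * y s ^ 6 + y s ^ 2 := by rw [h.x_eq hs]; ring
    have hS' : b ^ 2 * y s ^ 6 + y s ^ 2 ≠ 0 := hS ▸ (h.sq_add_sq_pos hs).ne'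
    have hys := (h.y_pos s hs).ne'
    refine (((hy.pow 6).const_mul (b ^ 2 / 6)).add ((hy.pow 2).const_mul (1/2))).add
      ((hasDerivAt_id s).const_mul 2) |>.congr_deriv ?_
    rw [hS]
    field_simp
    ring
  have hb_init : b ^ 2 * y 0 ^ 6 = x 0 ^ 2 := by
    have hy0 := (h.y_pos 0 (left_mem_Ico.mpr (ht.1.trans_lt ht.2))).ne'
    simp only [b]
    field_simp
  linarith

end WangSolution

theorem wang_ode_explicit_general (θ : ℝ)
    (b τ : ℝ) (hb : b = Real.cos θ / Real.sin θ ^ 3)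
    (lam x y : ℝ → ℝ)
    (h0 : lam 0 = 0) (hx0 : x 0 = Real.cos θ) (hy0 : y 0 = Real.sin θ)
    (hypos : ∀ t ∈ Ico (0:ℝ) τ, 0 < y t)
    (hlam : ∀ t ∈ Ico (0:ℝ) τ,
      HasDerivAt lam (8 * x t / (x t ^ 2 + y t ^ 2)) t)
    (hx : ∀ t ∈ Ico (0:ℝ) τ,
      HasDerivAt x (-6 * x t / (x t ^ 2 + y t ^ 2)) t)
    (hy : ∀ t ∈ Ico (0:ℝ) τ,
      HasDerivAt y (-2 * y t / (x t ^ 2 + y t ^ 2)) t) :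
    ∀ t ∈ Ico (0:ℝ) τ,
      x t = b * (y t) ^ 3 ∧
      lam t = (4/3) * Real.cos θ - (4/3) * x t ∧
      (b^2/6) * (y t) ^ 6 + (1/2) * (y t) ^ 2 =
        -2*t + (1/6) * Real.cos θ ^ 2 + (1/2) * Real.sin θ ^ 2 := by
  intro t ht
  have h : WangSolution τ lam x y := ⟨hypos, hlam, hx, hy⟩
  rw [hb, ← hx0, ← hy0]
  exact ⟨h.x_eq ht, by rw [h.lam_eq ht, h0, zero_add], h.energy_eq ht⟩

/-- Explicit invariants of the Wang ODE system with initial data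
`(λ, x, y)(0) = (0, cos θ, sin θ)`: on `[0,τ)` one has `x = b y³`,
`λ = (4/3)cos θ − (4/3)x`, and `(b²/6) y⁶ + (1/2) y² = −2t + (1/6)cos²θ + (1/2)sin²θ`,
where `b = cos θ / sin³θ` and `τ = (1/6)(1 − (1/2)cos 2θ)`. -/
theorem wang_ode_explicit (θ : ℝ) (hθ : θ ∈ Ioo (0:ℝ) (Real.pi/2))
    (b τ : ℝ) (hb : b = Real.cos θ / Real.sin θ ^ 3)
    (hτ : τ = (1/6) * (1 - (1/2) * Real.cos (2*θ)))
    (lam x y : ℝ → ℝ)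
    (h0 : lam 0 = 0) (hx0 : x 0 = Real.cos θ) (hy0 : y 0 = Real.sin θ)
    (hypos : ∀ t ∈ Ico (0:ℝ) τ, 0 < y t)
    (hlam : ∀ t ∈ Ico (0:ℝ) τ,
      HasDerivAt lam (8 * x t / (x t ^ 2 + y t ^ 2)) t)
    (hx : ∀ t ∈ Ico (0:ℝ) τ,
      HasDerivAt x (-6 * x t / (x t ^ 2 + y t ^ 2)) t)
    (hy : ∀ t ∈ Ico (0:ℝ) τ,
      HasDerivAt y (-2 * y t / (x t ^ 2 + y t ^ 2)) t) :
    ∀ t ∈ Ico (0:ℝ) τ,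
      x t = b * (y t) ^ 3 ∧
      lam t = (4/3) * Real.cos θ - (4/3) * x t ∧
      (b^2/6) * (y t) ^ 6 + (1/2) * (y t) ^ 2 =
        -2*t + (1/6) * Real.cos θ ^ 2 + (1/2) * Real.sin θ ^ 2 :=
  wang_ode_explicit_general θ b τ hb lam x y h0 hx0 hy0 hypos hlam hx hy
end

section
/- For θ ∈ (0, π/2) set K(θ) = sin⁶θ/(36·cos²θ) and define ξ_θ(t) = −(4√2/√3)·( cbrt(√(K(θ)+t²) + t) − cbrt(√(K(θ)+t²) − t) )^{3/2} for t ≥ 0, where cbrt denotes the real cube root (and both cube-root arguments are nonnegative). Then for any θ₁, θ₂ ∈ (0, π/2) and any t ≥ 0, with c = (K(θ₂)/K(θ₁))^{1/4}, one has ξ_{θ₂}(t) = c·ξ_{θ₁}(t/c²). In other words, all the functions ξ_θ agree up to the Loewner scaling ξ ↦ c·ξ(·/c²). -/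
/-!
The driver `ξ_θ` depends on `θ` only through `K(θ)`, and it is homogeneous in `(K, t)`:
replacing `(K, t)` by `(c⁴K, c²t)` multiplies both cube-root arguments `√(K+t²) ± t` by `c²`,
hence the cube roots by `c^{2/3}` and their difference raised to `3/2` by `c`.
With `c⁴ = K(θ₂)/K(θ₁)` this is the claimed scaling.
-/

open Set

/-- The real (odd) cube root of a real number. -/
noncomputable def cbrt (a : ℝ) : ℝ :=
  if 0 ≤ a then a ^ ((1:ℝ)/3) else -((-a) ^ ((1:ℝ)/3))

lemma cbrt_of_nonneg {a : ℝ} (ha : 0 ≤ a) : cbrt a = a ^ ((1:ℝ)/3) := if_pos ha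

lemma cbrt_nonneg {a : ℝ} (ha : 0 ≤ a) : 0 ≤ cbrt a := by
  rw [cbrt_of_nonneg ha]
  positivity

lemma cbrt_mul_of_nonneg {a b : ℝ} (ha : 0 ≤ a) (hb : 0 ≤ b) :
    cbrt (a * b) = cbrt a * cbrt b := by
  rw [cbrt_of_nonneg (mul_nonneg ha hb), cbrt_of_nonneg ha, cbrt_of_nonneg hb,
    Real.mul_rpow ha hb]

lemma cbrt_le_cbrt_of_nonneg {a b : ℝ} (ha : 0 ≤ a) (hab : a ≤ b) : cbrt a ≤ cbrt b := by
  rw [cbrt_of_nonneg ha, cbrt_of_nonneg (ha.trans hab)]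
  exact Real.rpow_le_rpow ha hab (by norm_num)

lemma cbrt_sq_rpow_three_halves {c : ℝ} (hc : 0 ≤ c) : cbrt (c ^ 2) ^ ((3:ℝ)/2) = c := by
  rw [cbrt_of_nonneg (by positivity), ← Real.rpow_natCast, ← Real.rpow_mul hc,
    ← Real.rpow_mul hc]
  norm_num

lemma sqrt_pow_four_mul_add_mul_sq (k c t : ℝ) :
    Real.sqrt (c ^ 4 * k + (c ^ 2 * t) ^ 2) = c ^ 2 * Real.sqrt (k + t ^ 2) := by
  rw [show c ^ 4 * k + (c ^ 2 * t) ^ 2 = (c ^ 2) ^ 2 * (k + t ^ 2) by ring,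
    Real.sqrt_mul (by positivity), Real.sqrt_sq (by positivity)]

lemma abs_le_sqrt_add_sq {k : ℝ} (hk : 0 ≤ k) (t : ℝ) : |t| ≤ Real.sqrt (k + t ^ 2) :=
  Real.abs_le_sqrt (by linarith)

/-- `ξ_θ = −(4√2/√3) · wangProfile (K θ)`. -/
noncomputable def wangProfile (k t : ℝ) : ℝ :=
  (cbrt (Real.sqrt (k + t ^ 2) + t) - cbrt (Real.sqrt (k + t ^ 2) - t)) ^ ((3:ℝ)/2)

lemma wangProfile_scale {k c t : ℝ} (hk : 0 ≤ k) (hc : 0 ≤ c) (ht : 0 ≤ t) :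
    wangProfile (c ^ 4 * k) (c ^ 2 * t) = c * wangProfile k t := by
  set u := Real.sqrt (k + t ^ 2)
  obtain ⟨hlo, hhi⟩ := abs_le.mp (abs_le_sqrt_add_sq hk t)
  have hplus : 0 ≤ u + t := by linarith
  have hminus : 0 ≤ u - t := by linarith
  have hc2 : 0 ≤ c ^ 2 := by positivity
  have hdiff : 0 ≤ cbrt (u + t) - cbrt (u - t) :=
    sub_nonneg.2 (cbrt_le_cbrt_of_nonneg hminus (by linarith))
  calc wangProfile (c ^ 4 * k) (c ^ 2 * t)
      = (cbrt (c ^ 2) * (cbrt (u + t) - cbrt (u - t))) ^ ((3:ℝ)/2) := by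
        rw [wangProfile, sqrt_pow_four_mul_add_mul_sq, ← mul_add, ← mul_sub, cbrt_mul_of_nonneg hc2 hplus,
          cbrt_mul_of_nonneg hc2 hminus, mul_sub]
    _ = c * wangProfile k t := by
        rw [Real.mul_rpow (cbrt_nonneg hc2) hdiff, cbrt_sq_rpow_three_halves hc]
        rfl

lemma sin_pow_six_div_cos_sq_pos {θ : ℝ} (hθ : θ ∈ Ioo (0:ℝ) (Real.pi/2)) :
    0 < Real.sin θ ^ 6 / (36 * Real.cos θ ^ 2) := by
  have hsin : 0 < Real.sin θ :=
    Real.sin_pos_of_pos_of_lt_pi hθ.1 (hθ.2.trans (by linarith [Real.pi_pos]))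
  have hcos : 0 < Real.cos θ :=
    Real.cos_pos_of_mem_Ioo ⟨by linarith [hθ.1, Real.pi_pos], hθ.2⟩
  positivity

/-- Universality of the Wang upward drivers: for any
`θ₁, θ₂ ∈ (0, π/2)` and `t ≥ 0`, with `c = (K(θ₂)/K(θ₁))^{1/4}`, one has
`ξ_{θ₂}(t) = c · ξ_{θ₁}(t/c²)`, where `K(θ) = sin⁶θ/(36 cos²θ)` and
`ξ_θ(t) = −(4√2/√3)(cbrt(√(K(θ)+t²)+t) − cbrt(√(K(θ)+t²)−t))^{3/2}`. -/
theorem wang_driver_universal (K : ℝ → ℝ)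
    (hK : ∀ θ, K θ = Real.sin θ ^ 6 / (36 * Real.cos θ ^ 2))
    (ξ : ℝ → ℝ → ℝ)
    (hξ : ∀ θ t, ξ θ t = -(4 * Real.sqrt 2 / Real.sqrt 3) *
      (cbrt (Real.sqrt (K θ + t^2) + t) - cbrt (Real.sqrt (K θ + t^2) - t)) ^ ((3:ℝ)/2)) :
    ∀ θ₁ ∈ Ioo (0:ℝ) (Real.pi/2), ∀ θ₂ ∈ Ioo (0:ℝ) (Real.pi/2), ∀ t : ℝ, 0 ≤ t →
      ξ θ₂ t = (K θ₂ / K θ₁) ^ ((1:ℝ)/4) *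
        ξ θ₁ (t / ((K θ₂ / K θ₁) ^ ((1:ℝ)/4)) ^ 2) := by
  intro θ₁ hθ₁ θ₂ hθ₂ t ht
  have hξ' : ∀ θ t, ξ θ t = -(4 * Real.sqrt 2 / Real.sqrt 3) * wangProfile (K θ) t := hξ
  have hK₁ : 0 < K θ₁ := hK θ₁ ▸ sin_pow_six_div_cos_sq_pos hθ₁
  have hK₂ : 0 < K θ₂ := hK θ₂ ▸ sin_pow_six_div_cos_sq_pos hθ₂
  set c := (K θ₂ / K θ₁) ^ ((1:ℝ)/4) with hc_def
  have hc : 0 < c := by positivity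
  have hKc : K θ₂ = c ^ 4 * K θ₁ := by
    rw [hc_def, ← Real.rpow_natCast, ← Real.rpow_mul (by positivity)]
    norm_num [hK₁.ne']
  have htc : c ^ 2 * (t / c ^ 2) = t := by field_simp
  calc ξ θ₂ t
      = -(4 * Real.sqrt 2 / Real.sqrt 3) * wangProfile (c ^ 4 * K θ₁) (c ^ 2 * (t / c ^ 2)) := by
        rw [hξ', hKc, htc]
    _ = c * ξ θ₁ (t / c ^ 2) := by
        rw [wangProfile_scale hK₁.le hc.le (by positivity), hξ']
        ring
end

section
/- Let τ > 0 and let ξ, x, y : [0,τ) → ℝ be differentiable functions solving the EMW ODE system, with x(t) < 0 < y(t) for all t ∈ [0,τ). Then for every t ∈ [0,τ): (y(t)−x(t))² − 2x(t)y(t) = (y(0)−x(0))² − 2x(0)y(0) − 24t, and ξ(t) + (2/3)·(x(t)+y(t)) = ξ(0) + (2/3)·(x(0)+y(0)). -/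
open Set

theorem eq_add_sub_smul_of_hasDerivAt_const {E : Type*} [NormedAddCommGroup E] [NormedSpace ℝ E]
    {f : ℝ → E} {c : E} {a b : ℝ} (hf : ∀ t ∈ Ico a b, HasDerivAt f c t) :
    ∀ t ∈ Ico a b, f t = f a + (t - a) • c := by
  intro t ⟨hat, htb⟩
  have hsub : Icc a t ⊆ Ico a b := fun s hs => ⟨hs.1, hs.2.trans_lt htb⟩
  have hline : ∀ s, HasDerivAt (fun s => f a + (s - a) • c) c s := fun s => by
    simpa using (((hasDerivAt_id s).sub_const a).smul_const c).const_add (f a)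
  refine eq_of_has_deriv_right_eq (a := a) (b := t)
    (fun s hs => (hf s (hsub (Ico_subset_Icc_self hs))).hasDerivWithinAt)
    (fun s _ => (hline s).hasDerivWithinAt)
    (fun s hs => (hf s (hsub hs)).continuousAt.continuousWithinAt)
    (fun s _ => (hline s).continuousAt.continuousWithinAt) (by simp) t ⟨hat, le_rfl⟩

section EMW

variable {ξ x y : ℝ → ℝ} {t : ℝ}

theorem emw_hasDerivAt_quadratic (hx0 : x t ≠ 0) (hy0 : y t ≠ 0)
    (hx : HasDerivAt x (2 / x t + 4 / y t) t) (hy : HasDerivAt y (4 / x t + 2 / y t) t) :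
    HasDerivAt (fun s => (y s - x s) ^ 2 - 2 * x s * y s) (-24) t := by
  refine (((hy.sub hx).pow 2).sub ((hx.const_mul 2).mul hy)).congr_deriv ?_
  rw [Pi.sub_apply]
  field_simp
  ring

theorem emw_hasDerivAt_driving (hξ : HasDerivAt ξ (-4 / x t - 4 / y t) t)
    (hx : HasDerivAt x (2 / x t + 4 / y t) t) (hy : HasDerivAt y (4 / x t + 2 / y t) t) :
    HasDerivAt (fun s => ξ s + (2 / 3) * (x s + y s)) 0 t := by
  refine (hξ.add ((hx.add hy).const_mul (2 / 3))).congr_deriv ?_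
  ring

end EMW

theorem emw_ode_conserved_general (τ : ℝ) (ξ x y : ℝ → ℝ)
    (hxy : ∀ t ∈ Ico (0:ℝ) τ, x t < 0 ∧ 0 < y t)
    (hξ : ∀ t ∈ Ico (0:ℝ) τ, HasDerivAt ξ (-4 / x t - 4 / y t) t)
    (hx : ∀ t ∈ Ico (0:ℝ) τ, HasDerivAt x (2 / x t + 4 / y t) t)
    (hy : ∀ t ∈ Ico (0:ℝ) τ, HasDerivAt y (4 / x t + 2 / y t) t) :
    ∀ t ∈ Ico (0:ℝ) τ,
      (y t - x t)^2 - 2 * x t * y t = (y 0 - x 0)^2 - 2 * x 0 * y 0 - 24 * t ∧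
      ξ t + (2/3) * (x t + y t) = ξ 0 + (2/3) * (x 0 + y 0) := by
  intro t ht
  have hquad := eq_add_sub_smul_of_hasDerivAt_const (fun s hs =>
    emw_hasDerivAt_quadratic (hxy s hs).1.ne (hxy s hs).2.ne' (hx s hs) (hy s hs)) t ht
  have hdriving := eq_add_sub_smul_of_hasDerivAt_const (fun s hs =>
    emw_hasDerivAt_driving (hξ s hs) (hx s hs) (hy s hs)) t ht
  simp only [smul_eq_mul, sub_zero, mul_zero, add_zero] at hquad hdriving
  exact ⟨by linarith, hdriving⟩

/-- Conservation laws for the EMW ODE system: if `ξ, x, y` solve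
`ξ' = −4/x − 4/y`, `x' = 2/x + 4/y`, `y' = 4/x + 2/y` on `[0,τ)` with `x < 0 < y`,
then `(y−x)² − 2xy` decreases linearly at rate 24 and `ξ + (2/3)(x+y)` is constant. -/
theorem emw_ode_conserved (τ : ℝ) (hτ : 0 < τ) (ξ x y : ℝ → ℝ)
    (hxy : ∀ t ∈ Ico (0:ℝ) τ, x t < 0 ∧ 0 < y t)
    (hξ : ∀ t ∈ Ico (0:ℝ) τ, HasDerivAt ξ (-4 / x t - 4 / y t) t)
    (hx : ∀ t ∈ Ico (0:ℝ) τ, HasDerivAt x (2 / x t + 4 / y t) t)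
    (hy : ∀ t ∈ Ico (0:ℝ) τ, HasDerivAt y (4 / x t + 2 / y t) t) :
    ∀ t ∈ Ico (0:ℝ) τ,
      (y t - x t)^2 - 2 * x t * y t = (y 0 - x 0)^2 - 2 * x 0 * y 0 - 24 * t ∧
      ξ t + (2/3) * (x t + y t) = ξ 0 + (2/3) * (x 0 + y 0) :=
  emw_ode_conserved_general τ ξ x y hxy hξ hx hy
end

section
/- Let T > 0 and let ξ, x, y : [0,T] → ℝ be differentiable functions solving the EMW ODE system, with x(t) < 0 < y(t) for all t ∈ [0,T]. Then the derivative identity d/dt [ 4·log(−x(t)/y(t)) − 8·log((y(t)−x(t))/y(t)) ] = (1/2)·ξ'(t)² holds on [0,T]; consequently (1/2)·∫₀ᵀ ξ'(t)² dt = [ 4·log(−x(T)/y(T)) − 8·log((y(T)−x(T))/y(T)) ] − [ 4·log(−x(0)/y(0)) − 8·log((y(0)−x(0))/y(0)) ]. -/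
/-!
For any differentiable `x < 0 < y`, the potential `P = 4 log(−x/y) − 8 log((y−x)/y)` has
`P' = 4 (x'/x − y'/y) − 8 ((y'−x')/(y−x) − y'/y)`. Along the EMW flow
`y' − x' = 2 (y − x)/(x y)`, so the middle quotient collapses to `2/(x y)` and
`P' = 8/x² + 16/(x y) + 8/y² = ½ (4/x + 4/y)² = ½ ξ'²`.
The energy identity is then the fundamental theorem of calculus, `ξ'` being
continuous because it equals `−4/x − 4/y`.
-/

open Set Real

noncomputable def emwPotential (x y : ℝ) : ℝ :=
  4 * log (-x / y) - 8 * log ((y - x) / y)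

theorem hasDerivAt_emwPotential {x y : ℝ → ℝ} {x' y' t : ℝ}
    (hx : HasDerivAt x x' t) (hy : HasDerivAt y y' t) (hxt : x t < 0) (hyt : 0 < y t) :
    HasDerivAt (fun s => emwPotential (x s) (y s))
      (4 * (x' / x t - y' / y t) - 8 * ((y' - x') / (y t - x t) - y' / y t)) t := by
  have hx0 : x t ≠ 0 := hxt.ne
  have hyx : 0 < y t - x t := by linarith
  have hneg := ((hx.neg.div hy hyt.ne').log (div_pos (neg_pos.mpr hxt) hyt).ne').const_mul 4
  have hgap := (((hy.sub hx).div hy hyt.ne').log (div_pos hyx hyt).ne').const_mul 8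
  refine (hneg.sub hgap).congr_deriv ?_
  simp only [Pi.neg_apply, Pi.sub_apply, Pi.div_apply]
  field_simp
  ring

theorem emwPotential_rate_eq_half_sq {x y : ℝ} (hx : x ≠ 0) (hy : y ≠ 0) (hyx : y - x ≠ 0) :
    4 * ((2 / x + 4 / y) / x - (4 / x + 2 / y) / y)
      - 8 * (((4 / x + 2 / y) - (2 / x + 4 / y)) / (y - x) - (4 / x + 2 / y) / y)
      = (1 / 2) * (-4 / x - 4 / y) ^ 2 := by
  field_simp
  ring

/-- Energy identity for the EMW ODE system: along a solution with
`x < 0 < y`, the function `4 log(−x/y) − 8 log((y−x)/y)` has derivative `(1/2)ξ'(t)²`;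
consequently the Loewner energy `(1/2)∫₀ᵀ ξ'(t)² dt` equals the difference of this
function between the endpoints. -/
theorem emw_ode_energy (T : ℝ) (hT : 0 < T) (ξ x y : ℝ → ℝ)
    (hxy : ∀ t ∈ Icc (0:ℝ) T, x t < 0 ∧ 0 < y t)
    (hξ : ∀ t ∈ Icc (0:ℝ) T, HasDerivAt ξ (-4 / x t - 4 / y t) t)
    (hx : ∀ t ∈ Icc (0:ℝ) T, HasDerivAt x (2 / x t + 4 / y t) t)
    (hy : ∀ t ∈ Icc (0:ℝ) T, HasDerivAt y (4 / x t + 2 / y t) t) :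
    (∀ t ∈ Icc (0:ℝ) T,
      HasDerivAt (fun s => 4 * Real.log (-(x s) / y s) - 8 * Real.log ((y s - x s) / y s))
        ((1/2) * (deriv ξ t)^2) t) ∧
    (1/2) * (∫ t in (0:ℝ)..T, (deriv ξ t)^2) =
      (4 * Real.log (-(x T) / y T) - 8 * Real.log ((y T - x T) / y T)) -
      (4 * Real.log (-(x 0) / y 0) - 8 * Real.log ((y 0 - x 0) / y 0)) := by
  have hpot : ∀ t ∈ Icc (0:ℝ) T,
      HasDerivAt (fun s => emwPotential (x s) (y s)) ((1/2) * (deriv ξ t)^2) t := by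
    intro t ht
    obtain ⟨hxt, hyt⟩ := hxy t ht
    rw [(hξ t ht).deriv, ← emwPotential_rate_eq_half_sq hxt.ne hyt.ne' (by linarith)]
    exact hasDerivAt_emwPotential (hx t ht) (hy t ht) hxt hyt
  have hcont : ContinuousOn (fun t => (1/2) * (deriv ξ t)^2) (Icc 0 T) := by
    have hxc : ContinuousOn x (Icc 0 T) := fun t ht => (hx t ht).continuousAt.continuousWithinAt
    have hyc : ContinuousOn y (Icc 0 T) := fun t ht => (hy t ht).continuousAt.continuousWithinAt
    have hξ'c : ContinuousOn (fun t => -4 / x t - 4 / y t) (Icc 0 T) :=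
      (continuousOn_const.div hxc fun t ht => (hxy t ht).1.ne).sub
        (continuousOn_const.div hyc fun t ht => (hxy t ht).2.ne')
    exact ContinuousOn.congr (f := fun t => (1/2) * (-4 / x t - 4 / y t) ^ 2)
      (continuousOn_const.mul (hξ'c.pow 2)) fun t ht => by rw [(hξ t ht).deriv]
  refine ⟨hpot, ?_⟩
  rw [← intervalIntegral.integral_const_mul]
  exact intervalIntegral.integral_eq_sub_of_hasDerivAt (by rwa [uIcc_of_le hT.le])
    (hcont.intervalIntegrable_of_Icc hT.le)
end

section
/- Let x₀ < 0 < y₀ with −x₀ < y₀. Set C = −(2/3)^{1/3}·(y₀−x₀)²/(y₀+x₀)^{2/3} and τ = (1/24)·(x₀² − 4x₀y₀ + y₀²). For t ∈ [−(32/3)·τ, 0), define μ(t) = C/(3t) − (2/(3t))·Re( ( −C³ − (27/4)·t² − (27/12)·t·i·√(−(8/3)·C³ − 9t²) )^{1/3} ), where (·)^{1/3} is the principal complex cube root and the inner radicand −(8/3)C³ − 9t² is nonnegative for such t. Then for every t in this range, μ(t) > 0 and −(1/2)·μ(t)^{−2} + t·μ(t) = C; equivalently, μ(t) is a root of μ³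 − (C/t)·μ² − 1/(2t) = 0. -/
open Set

/-! Since `C < 0`, the number `z = -C³ - (27/4)t² - (27/12)t·i·√(-(8/3)C³ - 9t²)` has
modulus `-C³`, so its principal cube root `w` has modulus `-C` and argument in `[-π/3, π/3]`;
hence `Re w ≥ -C/2`. By the triple-angle formula `u = Re w` solves the depressed cubic
`4u³ - 3C²u = Re z`, and Cardano's substitution `μ = (C - 2u)/(3t)` turns this into
`2tμ³ - 2Cμ² = 1`. The radicand is nonnegative on `[-(32/3)τ, 0)` because
`(x₀² - 4x₀y₀ + y₀²)(y₀ + x₀) ≤ (y₀ - x₀)³`. -/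

namespace Complex

lemma cpow_one_div_three_pow_three (z : ℂ) : (z ^ ((1:ℂ)/3)) ^ 3 = z := by
  rw [one_div]
  exact_mod_cast cpow_nat_inv_pow z three_ne_zero

lemma norm_cpow_one_div_three {z : ℂ} {r : ℝ} (hr : 0 ≤ r) (hz : ‖z‖ = r ^ 3) :
    ‖z ^ ((1:ℂ)/3)‖ = r := by
  rw [← pow_left_inj₀ (norm_nonneg _) hr three_ne_zero, ← norm_pow,
    cpow_one_div_three_pow_three, hz]

lemma norm_cpow_mul_cos_le_re_cpow {y : ℝ} (hy₀ : 0 ≤ y) (hy₁ : y ≤ 1) (x : ℂ) :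
    ‖x ^ (y : ℂ)‖ * Real.cos (Real.pi * y) ≤ (x ^ (y : ℂ)).re := by
  rw [norm_cpow_real, cpow_ofReal_re, ← Real.cos_abs (arg x * y)]
  have harg : |arg x * y| ≤ Real.pi * y := by
    rw [abs_mul, abs_of_nonneg hy₀]
    exact mul_le_mul_of_nonneg_right (abs_arg_le_pi x) hy₀
  gcongr
  exact Real.cos_le_cos_of_nonneg_of_le_pi (abs_nonneg _)
    (by nlinarith [Real.pi_pos]) harg

lemma half_norm_le_re_cpow_one_div_three (z : ℂ) :
    ‖z ^ ((1:ℂ)/3)‖ / 2 ≤ (z ^ ((1:ℂ)/3)).re := by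
  have h := norm_cpow_mul_cos_le_re_cpow (y := 1/3) (by norm_num) (by norm_num) z
  rw [show Real.pi * (1/3) = Real.pi / 3 by ring, Real.cos_pi_div_three] at h
  push_cast at h
  linarith

lemma re_pow_three (w : ℂ) : (w ^ 3).re = 4 * w.re ^ 3 - 3 * ‖w‖ ^ 2 * w.re := by
  rw [Complex.sq_norm, normSq_apply]
  simp only [pow_succ, pow_zero, one_mul, mul_re, mul_im]
  ring

end Complex

lemma Real.rpow_div_three_pow_three {x : ℝ} (hx : 0 ≤ x) (p : ℝ) :
    (x ^ (p / 3)) ^ 3 = x ^ p := by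
  rw [← Real.rpow_natCast, ← Real.rpow_mul hx]
  norm_num

noncomputable def cardanoRadicand (C t : ℝ) : ℂ :=
  ((-C^3 - (27/4)*t^2 : ℝ) : ℂ) -
    ((27/12)*t : ℝ) * Complex.I * (Real.sqrt (-(8/3)*C^3 - 9*t^2) : ℝ)

lemma cardanoRadicand_re (C t : ℝ) : (cardanoRadicand C t).re = -C^3 - 27/4*t^2 := by
  simp only [cardanoRadicand, Complex.sub_re, Complex.mul_re, Complex.ofReal_re,
    Complex.ofReal_im, Complex.I_re, Complex.I_im]
  ring

lemma norm_cardanoRadicand {C t : ℝ} (h : 0 ≤ -(8/3)*C^3 - 9*t^2) :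
    ‖cardanoRadicand C t‖ = |C| ^ 3 := by
  have hs := Real.sq_sqrt h
  rw [← pow_left_inj₀ (norm_nonneg _) (by positivity) two_ne_zero, Complex.sq_norm,
    Complex.normSq_apply, cardanoRadicand_re]
  simp only [cardanoRadicand, Complex.sub_im, Complex.mul_im, Complex.mul_re,
    Complex.ofReal_re, Complex.ofReal_im, Complex.I_re, Complex.I_im]
  rw [← abs_pow, sq_abs]
  linear_combination (729/144 * t^2) * hs

lemma cube_of_eq_neg_rpow {x₀ y₀ C : ℝ} (hyx : 0 < y₀ + x₀)
    (hC : C = -(((2:ℝ)/3) ^ ((1:ℝ)/3) * (y₀ - x₀)^2 / (y₀ + x₀) ^ ((2:ℝ)/3))) :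
    C ^ 3 = -(2 / 3) * ((y₀ - x₀) ^ 6 / (y₀ + x₀) ^ 2) := by
  have hcube : C ^ 3 = -((((2:ℝ)/3) ^ ((1:ℝ)/3)) ^ 3 * ((y₀ - x₀) ^ 2) ^ 3 /
      ((y₀ + x₀) ^ ((2:ℝ)/3)) ^ 3) := by
    rw [hC]
    ring
  rw [hcube, Real.rpow_div_three_pow_three (by norm_num),
    Real.rpow_div_three_pow_three hyx.le, Real.rpow_one, Real.rpow_two]
  ring

lemma sq_mul_sq_le_pow_six {x₀ y₀ : ℝ} (hx₀ : x₀ < 0) (hy₀ : 0 < y₀) (hxy : -x₀ < y₀) :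
    (x₀ ^ 2 - 4 * x₀ * y₀ + y₀ ^ 2) ^ 2 * (y₀ + x₀) ^ 2 ≤ (y₀ - x₀) ^ 6 := by
  have hQ : 0 ≤ x₀ ^ 2 - 4 * x₀ * y₀ + y₀ ^ 2 := by
    nlinarith [mul_pos (neg_pos.2 hx₀) hy₀]
  -- `(y₀ - x₀)³ - (x₀² - 4x₀y₀ + y₀²)(y₀ + x₀) = 2x₀²(3y₀ - x₀)`
  have hcube : (x₀ ^ 2 - 4 * x₀ * y₀ + y₀ ^ 2) * (y₀ + x₀) ≤ (y₀ - x₀) ^ 3 := by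
    nlinarith [mul_nonneg (sq_nonneg x₀) (by linarith : (0:ℝ) ≤ 3 * y₀ - x₀)]
  calc (x₀ ^ 2 - 4 * x₀ * y₀ + y₀ ^ 2) ^ 2 * (y₀ + x₀) ^ 2
      = ((x₀ ^ 2 - 4 * x₀ * y₀ + y₀ ^ 2) * (y₀ + x₀)) ^ 2 := by ring
    _ ≤ ((y₀ - x₀) ^ 3) ^ 2 := pow_le_pow_left₀ (mul_nonneg hQ (by linarith)) hcube 2
    _ = (y₀ - x₀) ^ 6 := by ring

lemma radicand_nonneg {x₀ y₀ C t : ℝ} (hx₀ : x₀ < 0) (hy₀ : 0 < y₀) (hxy : -x₀ < y₀)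
    (hC : C ^ 3 = -(2 / 3) * ((y₀ - x₀) ^ 6 / (y₀ + x₀) ^ 2))
    (ht₁ : -(32/3) * ((1/24) * (x₀^2 - 4*x₀*y₀ + y₀^2)) ≤ t) (ht₀ : t < 0) :
    0 ≤ -(8/3)*C^3 - 9*t^2 := by
  have hA : 0 < (y₀ + x₀) ^ 2 := pow_pos (by linarith) 2
  have htQ : t ^ 2 ≤ (4 / 9 * (x₀ ^ 2 - 4 * x₀ * y₀ + y₀ ^ 2)) ^ 2 :=
    sq_le_sq' (by linarith) (by nlinarith [mul_pos (neg_pos.2 hx₀) hy₀])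
  have ht2 : 9 * t ^ 2 * (y₀ + x₀) ^ 2 ≤ 16 / 9 * (y₀ - x₀) ^ 6 := by
    nlinarith [sq_mul_sq_le_pow_six hx₀ hy₀ hxy, mul_le_mul_of_nonneg_right htQ hA.le]
  have hrad : -(8/3)*C^3 - 9*t^2
      = (16 / 9 * (y₀ - x₀) ^ 6 - 9 * t ^ 2 * (y₀ + x₀) ^ 2) / (y₀ + x₀) ^ 2 := by
    have hyx : y₀ + x₀ ≠ 0 := by linarith
    rw [hC]
    field_simp
    ring
  exact hrad ▸ div_nonneg (by linarith) hA.le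

lemma cardano_root {C t u μ : ℝ} (hC : C < 0) (ht : t < 0) (hu : -C / 2 ≤ u)
    (hcubic : 4 * u ^ 3 - 3 * C ^ 2 * u = -C ^ 3 - 27 / 4 * t ^ 2)
    (hμ : μ = (C - 2 * u) / (3 * t)) :
    0 < μ ∧ -(1/2) * (μ^2)⁻¹ + t * μ = C ∧ μ^3 - (C/t) * μ^2 - 1/(2*t) = 0 := by
  have ht₀ : t ≠ 0 := ht.ne
  have hμ_pos : 0 < μ := hμ ▸ div_pos_of_neg_of_neg (by linarith) (by linarith)
  have hμ₀ : μ ≠ 0 := hμ_pos.ne'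
  have hroot : 2 * t * μ ^ 3 - 2 * C * μ ^ 2 = 1 := by
    rw [hμ]
    field_simp
    linear_combination (-4) * hcubic
  refine ⟨hμ_pos, ?_, ?_⟩
  · field_simp
    linear_combination hroot
  · field_simp
    linear_combination hroot

/-- Cardano-type solution for the EMW driver: with
`C = −(2/3)^{1/3}(y₀−x₀)²/(y₀+x₀)^{2/3}` and `τ = (1/24)(x₀²−4x₀y₀+y₀²)`, the function
`μ(t) = C/(3t) − (2/(3t))·Re((−C³ − (27/4)t² − (27/12)·t·i·√(−(8/3)C³−9t²))^{1/3})`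
satisfies, for `t ∈ [−(32/3)τ, 0)`: the inner radicand is nonnegative, `μ(t) > 0`,
`−(1/2)μ(t)^{−2} + tμ(t) = C`, and `μ(t)` is a root of `μ³ − (C/t)μ² − 1/(2t) = 0`. -/
theorem emw_cardano (x₀ y₀ : ℝ) (hx₀ : x₀ < 0) (hy₀ : 0 < y₀) (hxy : -x₀ < y₀)
    (C τ : ℝ)
    (hC : C = -(((2:ℝ)/3) ^ ((1:ℝ)/3) * (y₀ - x₀)^2 / (y₀ + x₀) ^ ((2:ℝ)/3)))
    (hτ : τ = (1/24) * (x₀^2 - 4*x₀*y₀ + y₀^2))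
    (μ : ℝ → ℝ)
    (hμ : ∀ t : ℝ, μ t = C / (3*t) - (2 / (3*t)) *
      ((((-C^3 - (27/4)*t^2 : ℝ) : ℂ) -
        ((27/12)*t : ℝ) * Complex.I * (Real.sqrt (-(8/3)*C^3 - 9*t^2) : ℝ)) ^ ((1:ℂ)/3)).re) :
    ∀ t ∈ Ico (-(32/3)*τ) (0:ℝ),
      0 ≤ -(8/3)*C^3 - 9*t^2 ∧
      0 < μ t ∧
      -(1/2) * ((μ t)^2)⁻¹ + t * μ t = C ∧
      (μ t)^3 - (C/t) * (μ t)^2 - 1/(2*t) = 0 := by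
  rintro t ⟨ht₁, ht₀⟩
  have hC3 := cube_of_eq_neg_rpow (by linarith) hC
  have hC0 : C < 0 := by
    rw [hC, neg_lt_zero]
    exact div_pos (mul_pos (by positivity) (pow_pos (by linarith) 2))
      (Real.rpow_pos_of_pos (by linarith) _)
  have hrad := radicand_nonneg hx₀ hy₀ hxy hC3 (hτ ▸ ht₁) ht₀
  set w := cardanoRadicand C t ^ ((1:ℂ)/3)
  have hw_norm : ‖w‖ = -C := Complex.norm_cpow_one_div_three (by linarith)
    (by rw [norm_cardanoRadicand hrad, abs_of_neg hC0])
  have hw_re : -C / 2 ≤ w.re := hw_norm ▸ Complex.half_norm_le_re_cpow_one_div_three _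
  have hw_cubic : 4 * w.re ^ 3 - 3 * C ^ 2 * w.re = -C^3 - 27/4*t^2 := by
    rw [← cardanoRadicand_re, ← Complex.cpow_one_div_three_pow_three (cardanoRadicand C t),
      Complex.re_pow_three, hw_norm, neg_sq]
  have hμt : μ t = (C - 2 * w.re) / (3 * t) := by
    rw [hμ]
    unfold w cardanoRadicand
    ring
  exact ⟨hrad, cardano_root hC0 ht₀ hw_re hw_cubic hμt⟩
end

section
/- For 0 < t < π/6 define r(t) = −1 + ( (π/3)^{1/3} / √(π/6 + t) ) · 2·Re( ( −√(π/6 + t) + i·√(π/6 − t) )^{1/3} ), where (·)^{1/3} is the principal complex cube root. Then 0 < r(t) < 1 and t = (π/6) · ( (1 − r(t)) / (1 + r(t))³ ) · ( r(t)² + 4·r(t) + 1 ); equivalently, r(t) is a root of r³ + 3r² + 3αr + α = 0 with α = (t − π/6)/(t + π/6). -/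
/-!
Put `a = √(π/6 + t)`, `b = √(π/6 - t)` and `z = -a + b i`, so `‖z‖² = π/3`, and since `a > b` the
argument `θ = arg z` lies in `(3π/4, π)`. The principal cube root has real part
`‖z‖^{1/3} cos (θ/3)`, hence `u = 1 + r(t) = 2 ‖z‖ c / a` with `c = cos (θ/3) ∈ (1/2, √2/2)`.
The triple-angle formula `-a = ‖z‖ cos θ = ‖z‖ (4c³ - 3c)` gives `u = 2 / (3 - 4c²) ∈ (1, 2)` and
the cubic `a² u³ - 3 ‖z‖² u + 2 ‖z‖² = 0`, i.e. `(π/6 + t) u³ = (π/6) (6u - 4)`, which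
rearranges into both identities.
-/

open Set

section
open Real

theorem arg_neg_add_I_mul_mem_Ioo {a b : ℝ} (hb : 0 < b) (hab : b < a) :
    Complex.arg (((-a : ℝ) : ℂ) + Complex.I * b) ∈ Ioo (3 * π / 4) π := by
  set z : ℂ := ((-a : ℝ) : ℂ) + Complex.I * b
  have hre : z.re = -a := by simp [z]
  have him : z.im = b := by simp [z]
  have hnorm : ‖z‖ = √(a ^ 2 + b ^ 2) := by
    rw [Complex.norm_def, Complex.normSq_apply, hre, him]; ring_nf
  have hnonneg : 0 ≤ z.arg := Complex.arg_nonneg_iff.2 (him ▸ hb.le)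
  have hlt : z.arg < π := Complex.arg_lt_pi_iff.2 (Or.inr (him ▸ hb.ne'))
  refine ⟨?_, hlt⟩
  -- `a² > (a² + b²)/2` puts `cos (arg z) = -a/‖z‖` below `cos (3π/4) = -√2/2`
  have hcos : cos z.arg < cos (3 * π / 4) := by
    have h34 : cos (3 * π / 4) = -(√2 / 2) := by
      rw [show 3 * π / 4 = π - π / 4 by ring, cos_pi_sub, cos_pi_div_four]
    have hK : 0 < √(a ^ 2 + b ^ 2) := Real.sqrt_pos.2 (by positivity)
    have hsq : (√2 / 2 * √(a ^ 2 + b ^ 2)) ^ 2 < a ^ 2 := by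
      rw [mul_pow, div_pow, Real.sq_sqrt (by positivity), Real.sq_sqrt (by positivity)]
      nlinarith
    have : √2 / 2 * √(a ^ 2 + b ^ 2) < a := lt_of_pow_lt_pow_left₀ 2 (by linarith) hsq
    rw [Complex.cos_arg (by intro h; simp [h] at him; linarith), hre, hnorm, h34, neg_div,
      neg_lt_neg_iff, lt_div_iff₀ hK]
    linarith
  exact (Real.strictAntiOn_cos.lt_iff_gt ⟨hnonneg, hlt.le⟩
    ⟨by positivity, by linarith [pi_pos]⟩).1 hcos

theorem cos_div_three_mem_Ioo {θ : ℝ} (hθ : θ ∈ Ioo (3 * π / 4) π) :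
    cos (θ / 3) ∈ Ioo (1 / 2) (√2 / 2) := by
  obtain ⟨h1, h2⟩ := hθ
  have hπ := pi_pos
  rw [← cos_pi_div_three, ← cos_pi_div_four]
  exact ⟨strictAntiOn_cos ⟨by linarith, by linarith⟩ ⟨by linarith, by linarith⟩ (by linarith),
    strictAntiOn_cos ⟨by linarith, by linarith⟩ ⟨by linarith, by linarith⟩ (by linarith)⟩

theorem cubic_of_eq_triple_angle {a K c u : ℝ} (ha : a ≠ 0)
    (htriple : a = K * (3 * c - 4 * c ^ 3)) (hu : a * u = 2 * K * c) :
    a ^ 2 * u ^ 3 - 3 * K ^ 2 * u + 2 * K ^ 2 = 0 := by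
  have h : a * (a ^ 2 * u ^ 3 - 3 * K ^ 2 * u + 2 * K ^ 2) = 0 := by
    linear_combination (a ^ 2 * u ^ 2 + 2 * K * c * a * u + 4 * K ^ 2 * c ^ 2 - 3 * K ^ 2) * hu
      + 2 * K ^ 2 * htriple
  exact (mul_eq_zero.1 h).resolve_left ha

theorem mem_Ioo_of_eq_triple_angle {a K c u : ℝ} (hK : 0 < K) (hc : c ∈ Ioo (1 / 2) (√2 / 2))
    (htriple : a = K * (3 * c - 4 * c ^ 3)) (hu : a * u = 2 * K * c) :
    u ∈ Ioo 1 2 := by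
  obtain ⟨hc1, hc2⟩ := hc
  have hc2' : c ^ 2 < 1 / 2 := by
    nlinarith [Real.sq_sqrt (show (0 : ℝ) ≤ 2 by norm_num)]
  have hu' : (3 - 4 * c ^ 2) * u = 2 := by
    have h : K * c * ((3 - 4 * c ^ 2) * u - 2) = 0 := by linear_combination hu - u * htriple
    linarith [(mul_eq_zero.1 h).resolve_left (by positivity)]
  constructor <;> nlinarith

theorem rpow_one_third_sq_mul_rpow_one_third {x : ℝ} (hx : 0 ≤ x) :
    (x ^ 2) ^ (1 / 3 : ℝ) * x ^ (1 / 3 : ℝ) = x := by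
  rw [← Real.rpow_natCast_mul hx, ← Real.rpow_add' hx (by norm_num)]
  norm_num

theorem cube_root_ratio_spec {a b u : ℝ} (hb : 0 < b) (hab : b < a)
    (hu : a * u = 2 * (a ^ 2 + b ^ 2) ^ (1 / 3 : ℝ) *
      ((((-a : ℝ) : ℂ) + Complex.I * b) ^ ((1 : ℂ) / 3)).re) :
    u ∈ Ioo 1 2 ∧ a ^ 2 * u ^ 3 - 3 * (a ^ 2 + b ^ 2) * u + 2 * (a ^ 2 + b ^ 2) = 0 := by
  set z : ℂ := ((-a : ℝ) : ℂ) + Complex.I * b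
  have hre : z.re = -a := by simp [z]
  have hnorm_sq : ‖z‖ ^ 2 = a ^ 2 + b ^ 2 := by
    rw [Complex.sq_norm, Complex.normSq_apply, hre]; simp [z]; ring
  have hnorm : 0 < ‖z‖ := by nlinarith [norm_nonneg z]
  set c := cos (z.arg / 3)
  have hroot_re : (z ^ ((1 : ℂ) / 3)).re = ‖z‖ ^ (1 / 3 : ℝ) * c := by
    rw [show (1 : ℂ) / 3 = ((1 / 3 : ℝ) : ℂ) by push_cast; rfl, Complex.cpow_ofReal_re,
      mul_one_div]
  have htriple : a = ‖z‖ * (3 * c - 4 * c ^ 3) := by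
    have hcos : cos z.arg = 4 * c ^ 3 - 3 * c := by
      rw [show z.arg = 3 * (z.arg / 3) by ring]; exact cos_three_mul _
    linear_combination (Complex.norm_mul_cos_arg z).trans hre - ‖z‖ * hcos
  have hu' : a * u = 2 * ‖z‖ * c := by
    rw [hu, hroot_re, ← hnorm_sq]
    linear_combination 2 * c * rpow_one_third_sq_mul_rpow_one_third (norm_nonneg z)
  refine ⟨mem_Ioo_of_eq_triple_angle hnorm (cos_div_three_mem_Ioo
    (arg_neg_add_I_mul_mem_Ioo hb hab)) htriple hu', ?_⟩
  rw [← hnorm_sq]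
  exact cubic_of_eq_triple_angle (by linarith) htriple hu'

theorem time_eq_of_shifted_cubic {s t r : ℝ} (hr : 1 + r ≠ 0)
    (h : (s + t) * (1 + r) ^ 3 - 6 * s * (1 + r) + 4 * s = 0) :
    t = s * ((1 - r) / (1 + r) ^ 3) * (r ^ 2 + 4 * r + 1) := by
  rw [mul_div_assoc', div_mul_eq_mul_div, eq_div_iff (pow_ne_zero 3 hr)]
  linear_combination h

theorem ratio_cubic_of_shifted_cubic {s t r : ℝ} (hst : t + s ≠ 0)
    (h : (s + t) * (1 + r) ^ 3 - 6 * s * (1 + r) + 4 * s = 0) :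
    r ^ 3 + 3 * r ^ 2 + 3 * ((t - s) / (t + s)) * r + (t - s) / (t + s) = 0 := by
  field_simp
  linear_combination h

end

/-- Cardano inversion of the time–ratio relation for the universal
EMW curve: for `0 < t < π/6`, the quantity
`r(t) = −1 + ((π/3)^{1/3}/√(π/6+t)) · 2·Re((−√(π/6+t) + i√(π/6−t))^{1/3})`
lies in `(0,1)` and satisfies `t = (π/6)((1−r)/(1+r)³)(r²+4r+1)`; equivalently, `r(t)`
is a root of `r³ + 3r² + 3αr + α = 0` with `α = (t−π/6)/(t+π/6)`. -/
theorem emw_universal_ratio (r : ℝ → ℝ)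
    (hr : ∀ t : ℝ, r t = -1 + ((Real.pi/3) ^ ((1:ℝ)/3) / Real.sqrt (Real.pi/6 + t)) *
      (2 * ((((-Real.sqrt (Real.pi/6 + t) : ℝ) : ℂ) +
        Complex.I * (Real.sqrt (Real.pi/6 - t) : ℝ)) ^ ((1:ℂ)/3)).re)) :
    ∀ t ∈ Ioo (0:ℝ) (Real.pi/6),
      0 < r t ∧ r t < 1 ∧
      t = (Real.pi/6) * ((1 - r t) / (1 + r t)^3) * ((r t)^2 + 4*(r t) + 1) ∧
      (r t)^3 + 3*(r t)^2 + 3*((t - Real.pi/6)/(t + Real.pi/6))*(r t) +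
        (t - Real.pi/6)/(t + Real.pi/6) = 0 := by
  rintro t ⟨ht0, ht1⟩
  have hrt := hr t
  set a := Real.sqrt (Real.pi / 6 + t)
  set b := Real.sqrt (Real.pi / 6 - t)
  have ha2 : a ^ 2 = Real.pi / 6 + t := Real.sq_sqrt (by linarith [Real.pi_pos])
  have hb2 : b ^ 2 = Real.pi / 6 - t := Real.sq_sqrt (by linarith)
  have hb : 0 < b := Real.sqrt_pos.2 (by linarith)
  have hab : b < a := Real.sqrt_lt_sqrt (by linarith) (by linarith)
  have hsum : Real.pi / 3 = a ^ 2 + b ^ 2 := by rw [ha2, hb2]; ring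
  obtain ⟨⟨hu1, hu2⟩, hcubic⟩ := cube_root_ratio_spec (u := 1 + r t) hb hab (by
    rw [hrt, ← hsum]
    field_simp [(hb.trans hab).ne']
    ring)
  have hcubic' : (Real.pi / 6 + t) * (1 + r t) ^ 3 - 6 * (Real.pi / 6) * (1 + r t)
      + 4 * (Real.pi / 6) = 0 := by
    linear_combination hcubic - (1 + r t) ^ 3 * ha2 - (3 * (1 + r t) - 2) * hsum
  exact ⟨by linarith, by linarith, time_eq_of_shifted_cubic (by linarith) hcubic',
    ratio_cubic_of_shifted_cubic (by linarith) hcubic'⟩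
end

section
/- For 0 ≤ t ≤ 1/8 define γ₁(t) = 1 − √(1−8t) + i·(1−8t)^{1/4}·√(1 − √(1−8t)) ∈ ℂ. Then: (a) |γ₁(t) − 1/2| = 1/2 for all t ∈ [0,1/8], so γ₁ traces the circular arc through 0 and 1 meeting ℝ orthogonally; and (b) for every θ ∈ (0, π/2], evaluating at t(θ) = (1/8)·(1 − sin⁴θ) gives γ₁(t(θ)) = cos θ · (cos θ + i·sin θ), so the tip of the arc at capacity time t(θ) has argument exactly θ. -/
open Set Complex

/-!
Put `s = √(1 - 8t) ∈ [0, 1]`. Since `(1 - 8t)^{1/4} = √s`, the point `γ₁(t)` is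
`(1 - s) + i √s √(1 - s)`, and `(1/2 - s)² + s(1 - s) = 1/4` puts it on the circle.
At `t(θ)` one has `s = sin² θ`, so `γ₁ = cos² θ + i sin θ cos θ = cos θ · e^{iθ}`.
-/

lemma Real.rpow_one_div_four_eq_sqrt_sqrt {x : ℝ} (hx : 0 ≤ x) :
    x ^ ((1 : ℝ) / 4) = √(√x) := by
  rw [Real.sqrt_eq_rpow, Real.sqrt_eq_rpow, ← Real.rpow_mul hx]
  norm_num

noncomputable def arcPoint (s : ℝ) : ℂ :=
  ((1 - s : ℝ) : ℂ) + I * ((√s * √(1 - s) : ℝ) : ℂ)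

lemma norm_arcPoint_sub_half {s : ℝ} (hs₀ : 0 ≤ s) (hs₁ : s ≤ 1) :
    ‖arcPoint s - 1 / 2‖ = 1 / 2 := by
  have hsq : ‖arcPoint s - 1 / 2‖ ^ 2 = (1 / 2) ^ 2 := by
    rw [Complex.sq_norm, Complex.normSq_apply]
    simp only [arcPoint, sub_re, sub_im, add_re, add_im, mul_re, mul_im, ofReal_re,
      ofReal_im, I_re, I_im, div_ofNat_re, div_ofNat_im, one_re, one_im]
    have h₁ : √s ^ 2 = s := Real.sq_sqrt hs₀
    have h₂ : √(1 - s) ^ 2 = 1 - s := Real.sq_sqrt (by linarith)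
    linear_combination (√(1 - s) ^ 2) * h₁ + s * h₂
  exact (pow_left_inj₀ (norm_nonneg _) (by norm_num) two_ne_zero).mp hsq

lemma arcPoint_sin_sq {θ : ℝ} (hsin : 0 ≤ Real.sin θ) (hcos : 0 ≤ Real.cos θ) :
    arcPoint (Real.sin θ ^ 2) = Real.cos θ * (Real.cos θ + I * Real.sin θ) := by
  have hcos_sq : 1 - Real.sin θ ^ 2 = Real.cos θ ^ 2 := by
    linarith [Real.sin_sq_add_cos_sq θ]
  rw [arcPoint, hcos_sq, Real.sqrt_sq hsin, Real.sqrt_sq hcos]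
  push_cast
  ring

/-- The capacity parametrization
`γ₁(t) = 1 − √(1−8t) + i(1−8t)^{1/4}√(1−√(1−8t))` of the orthogonal circular arc:
(a) `|γ₁(t) − 1/2| = 1/2` for all `t ∈ [0,1/8]`; (b) for every `θ ∈ (0, π/2]`,
at `t(θ) = (1/8)(1 − sin⁴θ)` one has `γ₁(t(θ)) = cos θ (cos θ + i sin θ)`, so the tip
has argument exactly `θ`. -/
theorem circular_arc_parametrization (γ₁ : ℝ → ℂ)
    (hγ : ∀ t : ℝ, γ₁ t = ((1 - Real.sqrt (1 - 8*t) : ℝ) : ℂ) +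
      Complex.I * (((1 - 8*t) ^ ((1:ℝ)/4) * Real.sqrt (1 - Real.sqrt (1 - 8*t)) : ℝ) : ℂ)) :
    (∀ t ∈ Icc (0:ℝ) (1/8), ‖γ₁ t - 1/2‖ = 1/2) ∧
    ∀ θ ∈ Ioc (0:ℝ) (Real.pi/2),
      γ₁ ((1/8) * (1 - Real.sin θ ^ 4)) =
        (Real.cos θ : ℂ) * ((Real.cos θ : ℂ) + Complex.I * (Real.sin θ : ℂ)) := by
  have hγ_arc : ∀ t ≤ 1 / 8, γ₁ t = arcPoint √(1 - 8 * t) := fun t ht => by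
    rw [hγ, arcPoint, Real.rpow_one_div_four_eq_sqrt_sqrt (by linarith)]
  refine ⟨fun t ⟨ht₀, ht₁⟩ => ?_, fun θ ⟨hθ₀, hθ₁⟩ => ?_⟩
  · rw [hγ_arc t ht₁]
    exact norm_arcPoint_sub_half (Real.sqrt_nonneg _)
      (Real.sqrt_le_one.mpr (by linarith))
  · have hsin : 0 ≤ Real.sin θ :=
      Real.sin_nonneg_of_nonneg_of_le_pi hθ₀.le (by linarith [Real.pi_pos])
    have hcos : 0 ≤ Real.cos θ := Real.cos_nonneg_of_mem_Icc ⟨by linarith, hθ₁⟩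
    have hs : √(1 - 8 * ((1 / 8) * (1 - Real.sin θ ^ 4))) = Real.sin θ ^ 2 := by
      rw [show 1 - 8 * ((1 / 8) * (1 - Real.sin θ ^ 4)) = (Real.sin θ ^ 2) ^ 2 by ring]
      exact Real.sqrt_sq (by positivity)
    rw [hγ_arc _ (by nlinarith [pow_nonneg hsin 4]), hs]
    exact arcPoint_sin_sq hsin hcos
end

section
/- For every θ ∈ (0, π/2), (1/2)·∫₀^{(1−sin⁴θ)/8} 36/(1−8s) ds = −9·log(sin θ). Consequently, the Loewner energy used by the orthogonal circular arc to reach the point of argument θ (whose driver λ₁(t) = (3/2)(1−√(1−8t)) satisfies λ₁'(s)² = 36/(1−8s), and which reaches argument θ at time t(θ) = (1−sin⁴θ)/8) is exactly 9/8 times the minimal energy −8·log(sin θ) of the Wang minimizer through the same angle. -/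
open Set

open Real in
theorem integral_div_one_sub_mul {a T : ℝ} (c : ℝ) (ha : a ≠ 0) (hT : 0 < 1 - a * T) :
    ∫ s in (0:ℝ)..T, c / (1 - a * s) = -(c / a) * log (1 - a * T) := by
  simp_rw [div_eq_mul_inv c]
  rw [intervalIntegral.integral_const_mul, intervalIntegral.integral_comp_sub_mul (·⁻¹) ha,
    mul_zero, sub_zero, integral_inv_of_pos hT one_pos, one_div, log_inv, smul_eq_mul]
  field_simp

/-- For every `θ ∈ (0, π/2)`,
`(1/2)∫₀^{(1−sin⁴θ)/8} 36/(1−8s) ds = −9 log(sin θ)`; consequently the Loewner energy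
of the orthogonal circular arc up to the point of argument `θ` is exactly `9/8` times
the minimal energy `−8 log(sin θ)` of the Wang minimizer through the same angle. -/
theorem circular_arc_energy :
    ∀ θ ∈ Ioo (0:ℝ) (Real.pi/2),
      (1/2) * (∫ s in (0:ℝ)..((1 - Real.sin θ ^ 4)/8), 36 / (1 - 8*s)) =
        -9 * Real.log (Real.sin θ) ∧
      (1/2) * (∫ s in (0:ℝ)..((1 - Real.sin θ ^ 4)/8), 36 / (1 - 8*s)) =
        (9/8) * (-8 * Real.log (Real.sin θ)) := by
  intro θ hθ
  have hsin : 0 < Real.sin θ :=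
    Real.sin_pos_of_pos_of_lt_pi hθ.1 (hθ.2.trans (by linarith [Real.pi_pos]))
  have hend : 1 - 8 * ((1 - Real.sin θ ^ 4) / 8) = Real.sin θ ^ 4 := by ring
  have energy : (1/2) * (∫ s in (0:ℝ)..((1 - Real.sin θ ^ 4)/8), 36 / (1 - 8*s)) =
      -9 * Real.log (Real.sin θ) := by
    rw [integral_div_one_sub_mul 36 (by norm_num) (by rw [hend]; positivity), hend,
      Real.log_pow]
    ring
  exact ⟨energy, energy.trans (by ring)⟩
end

section
/- For 0 ≤ t < 1/8 set x(t) = −1 + √(1−8t) − √(1 − √(1−8t)) and y(t) = −1 + √(1−8t) + √(1 − √(1−8t)). Then for every α ∈ (0, 1/2), at the time t(α) = 1/8 − 2α²(1−α)² one has the welding-ratio identity y(t(α)) / ( y(t(α)) − x(t(α)) ) = α, and moreover (1/2)·∫₀^{t(α)} 36/(1−8s) ds = −(9/2)·log(4α(1−α)). Consequently the orthogonal circular arc uses exactly 9/8 times the minimal energy −4·log(4α(1−α)) needed to weld two boundary points with ratio parameter α. -/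
open Set

/-! At `t(α) = 1/8 − 2α²(1−α)²` one has `1 − 8t = (4α(1−α))²` and `1 − 4α(1−α) = (1−2α)²`, so
both nested square roots in `x` and `y` become polynomials in `α`: `y = 2α(1−2α)` and
`y − x = 2(1−2α)`. The energy integral is a logarithm, `∫₀ᵗ 36/(1−8s) ds = −(9/2) log(1−8t)`,
which at `t(α)` is `−9 log(4α(1−α))`. -/

noncomputable section

def weldingTime (α : ℝ) : ℝ := 1/8 - 2*α^2*(1-α)^2

def arcWeldLeft (t : ℝ) : ℝ := -1 + Real.sqrt (1 - 8*t) - Real.sqrt (1 - Real.sqrt (1 - 8*t))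

def arcWeldRight (t : ℝ) : ℝ := -1 + Real.sqrt (1 - 8*t) + Real.sqrt (1 - Real.sqrt (1 - 8*t))

end

theorem intervalIntegral_div_sub_mul {a b c d : ℝ} (k : ℝ) (hc : c ≠ 0)
    (ha : 0 < d - c*a) (hb : 0 < d - c*b) :
    ∫ s in a..b, k / (d - c*s) = k / c * Real.log ((d - c*a) / (d - c*b)) := by
  simp_rw [div_eq_mul_inv k]
  rw [intervalIntegral.integral_const_mul, intervalIntegral.integral_comp_sub_mul (·⁻¹) hc,
    integral_inv_of_pos hb ha, smul_eq_mul]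
  ring

section Welding

variable {α : ℝ}

theorem one_sub_eight_mul_weldingTime (α : ℝ) : 1 - 8 * weldingTime α = (4*α*(1-α))^2 := by
  unfold weldingTime; ring

theorem sqrt_one_sub_eight_mul_weldingTime (h0 : 0 ≤ α) (h1 : α ≤ 1) :
    Real.sqrt (1 - 8 * weldingTime α) = 4*α*(1-α) := by
  rw [one_sub_eight_mul_weldingTime, Real.sqrt_sq (by nlinarith)]

theorem sqrt_one_sub_sqrt_one_sub_eight_mul_weldingTime (h0 : 0 ≤ α) (h : α ≤ 1/2) :
    Real.sqrt (1 - Real.sqrt (1 - 8 * weldingTime α)) = 1 - 2*α := by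
  rw [sqrt_one_sub_eight_mul_weldingTime h0 (by linarith),
    show 1 - 4*α*(1-α) = (1 - 2*α)^2 by ring, Real.sqrt_sq (by linarith)]

theorem arcWeldRight_weldingTime (h0 : 0 ≤ α) (h : α ≤ 1/2) :
    arcWeldRight (weldingTime α) = 2*α*(1 - 2*α) := by
  rw [arcWeldRight, sqrt_one_sub_sqrt_one_sub_eight_mul_weldingTime h0 h,
    sqrt_one_sub_eight_mul_weldingTime h0 (by linarith)]
  ring

theorem arcWeldRight_sub_arcWeldLeft_weldingTime (h0 : 0 ≤ α) (h : α ≤ 1/2) :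
    arcWeldRight (weldingTime α) - arcWeldLeft (weldingTime α) = 2*(1 - 2*α) := by
  rw [arcWeldRight, arcWeldLeft, sqrt_one_sub_sqrt_one_sub_eight_mul_weldingTime h0 h]
  ring

theorem arcWeld_ratio_weldingTime (hα : α ∈ Ioo (0:ℝ) (1/2)) :
    arcWeldRight (weldingTime α) /
      (arcWeldRight (weldingTime α) - arcWeldLeft (weldingTime α)) = α := by
  obtain ⟨h0, h⟩ := hα
  rw [arcWeldRight_sub_arcWeldLeft_weldingTime h0.le h.le, arcWeldRight_weldingTime h0.le h.le,
    div_eq_iff (by linarith)]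
  ring

theorem half_integral_driver_energy_weldingTime (hα : α ∈ Ioo (0:ℝ) 1) :
    (1/2) * (∫ s in (0:ℝ)..weldingTime α, 36 / (1 - 8*s)) = -(9/2) * Real.log (4*α*(1-α)) := by
  have hpos : 0 < 4*α*(1-α) := by nlinarith [hα.1, hα.2]
  rw [intervalIntegral_div_sub_mul 36 (by norm_num) (by norm_num)
      (by rw [one_sub_eight_mul_weldingTime]; positivity),
    one_sub_eight_mul_weldingTime, mul_zero, sub_zero]
  simp only [one_div, Real.log_inv, Real.log_pow]
  ring

end Welding

/-- Welding endpoints of the orthogonal circular arc: with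
`x(t) = −1 + √(1−8t) − √(1−√(1−8t))` and `y(t) = −1 + √(1−8t) + √(1−√(1−8t))`, for
every `α ∈ (0,1/2)` and `t(α) = 1/8 − 2α²(1−α)²` one has the welding-ratio identity
`y(t(α))/(y(t(α)) − x(t(α))) = α` and
`(1/2)∫₀^{t(α)} 36/(1−8s) ds = −(9/2)log(4α(1−α))`, which is exactly `9/8` times the
minimal welding energy `−4 log(4α(1−α))`. -/
theorem circular_arc_welding_energy (x y : ℝ → ℝ)
    (hx : ∀ t : ℝ, x t = -1 + Real.sqrt (1 - 8*t) - Real.sqrt (1 - Real.sqrt (1 - 8*t)))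
    (hy : ∀ t : ℝ, y t = -1 + Real.sqrt (1 - 8*t) + Real.sqrt (1 - Real.sqrt (1 - 8*t))) :
    ∀ α ∈ Ioo (0:ℝ) (1/2),
      y (1/8 - 2*α^2*(1-α)^2) / (y (1/8 - 2*α^2*(1-α)^2) - x (1/8 - 2*α^2*(1-α)^2)) = α ∧
      (1/2) * (∫ s in (0:ℝ)..(1/8 - 2*α^2*(1-α)^2), 36 / (1 - 8*s)) =
        -(9/2) * Real.log (4*α*(1-α)) ∧
      (1/2) * (∫ s in (0:ℝ)..(1/8 - 2*α^2*(1-α)^2), 36 / (1 - 8*s)) =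
        (9/8) * (-4 * Real.log (4*α*(1-α))) := by
  obtain rfl : x = arcWeldLeft := funext hx
  obtain rfl : y = arcWeldRight := funext hy
  intro α hα
  have henergy : (1/2) * (∫ s in (0:ℝ)..(1/8 - 2*α^2*(1-α)^2), 36 / (1 - 8*s)) =
      -(9/2) * Real.log (4*α*(1-α)) :=
    half_integral_driver_energy_weldingTime ⟨hα.1, by linarith [hα.2]⟩
  exact ⟨arcWeld_ratio_weldingTime hα, henergy, by rw [henergy]; ring⟩
end

section
/- For 0 < t < 1 set λ(t) = 3√2·(1 − √(1−t)), g₋(t) = √2 − √2·√(1−t) − 2√2·√(1 − √(1−t)), and g₊(t) = √2 − √2·√(1−t) + 2√2·√(1 − √(1−t)). Then λ is differentiable on (0,1) with λ'(t) = 3/(g₋(t) − λ(t)) + 3/(g₊(t) − λ(t)). (This exhibits the orthogonal circular arc, whose driver is λ and whose base prime ends map to g₋(t), g₊(t), as upwards SLE₀(−3,−3).) -/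
/-!
Write `s = √(1 - t)` and `u = √(1 - s)`, so that `s = 1 - u²` with `0 < u < 1` on `(0, 1)`.
In these variables `g₋ - λ = -2√2 u (1 + u)` and `g₊ - λ = 2√2 u (1 - u)`, and partial fractions
turn `3/(g₋ - λ) + 3/(g₊ - λ)` into `3/(√2 s)`, which is `λ' = 3√2/(2s)` because `√2² = 2`.
-/

open Set Real

theorem hasDerivAt_const_mul_one_sub_sqrt_one_sub (c : ℝ) {t : ℝ} (ht : t < 1) :
    HasDerivAt (fun x => c * (1 - √(1 - x))) (c / (2 * √(1 - t))) t := by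
  have hsqrt : HasDerivAt (fun x => √(1 - x)) (-1 / (2 * √(1 - t))) t :=
    ((hasDerivAt_id' t).const_sub 1).sqrt (sub_pos.2 ht).ne'
  exact ((hsqrt.const_sub 1).const_mul c).congr_deriv (by ring)

theorem div_neg_add_div_eq_div_one_sub_sq (c a : ℝ) {u : ℝ} (hu : u ≠ 0) (hu₁ : 1 - u ≠ 0)
    (hu₂ : 1 + u ≠ 0) :
    c / -(2 * a * u * (1 + u)) + c / (2 * a * u * (1 - u)) = c / (a * (1 - u ^ 2)) := by
  rcases eq_or_ne a 0 with rfl | ha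
  · simp
  have hsq : 1 - u ^ 2 ≠ 0 := by
    rw [show 1 - u ^ 2 = (1 - u) * (1 + u) by ring]
    exact mul_ne_zero hu₁ hu₂
  field_simp
  ring

/-- The orthogonal circular arc from 0 towards `2√2`, with driver
`λ(t) = 3√2(1 − √(1−t))` and base prime-end images
`g₋(t) = √2 − √2√(1−t) − 2√2√(1−√(1−t))`, `g₊(t) = √2 − √2√(1−t) + 2√2√(1−√(1−t))`,
is upwards SLE₀(−3,−3): for `t ∈ (0,1)`, `λ` is differentiable at `t` with
`λ'(t) = 3/(g₋(t) − λ(t)) + 3/(g₊(t) − λ(t))`. -/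
theorem circular_arc_sle (lam gm gp : ℝ → ℝ)
    (hlam : ∀ t : ℝ, lam t = 3 * Real.sqrt 2 * (1 - Real.sqrt (1 - t)))
    (hgm : ∀ t : ℝ, gm t = Real.sqrt 2 - Real.sqrt 2 * Real.sqrt (1 - t) -
      2 * Real.sqrt 2 * Real.sqrt (1 - Real.sqrt (1 - t)))
    (hgp : ∀ t : ℝ, gp t = Real.sqrt 2 - Real.sqrt 2 * Real.sqrt (1 - t) +
      2 * Real.sqrt 2 * Real.sqrt (1 - Real.sqrt (1 - t))) :
    ∀ t ∈ Ioo (0:ℝ) 1,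
      HasDerivAt lam (3 / (gm t - lam t) + 3 / (gp t - lam t)) t := by
  rintro t ⟨ht₀, ht₁⟩
  set s := √(1 - t)
  set u := √(1 - s)
  have hs : 0 < s := sqrt_pos.2 (by linarith)
  have hs₁ : s < 1 := by rw [sqrt_lt' one_pos]; linarith
  have hu_sq : u ^ 2 = 1 - s := sq_sqrt (by linarith)
  have hu : 0 < u := sqrt_pos.2 (by linarith)
  have hu₁ : u < 1 := by nlinarith
  have hgm_sub : gm t - lam t = -(2 * √2 * u * (1 + u)) := by
    rw [hgm, hlam]; linear_combination 2 * √2 * hu_sq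
  have hgp_sub : gp t - lam t = 2 * √2 * u * (1 - u) := by
    rw [hgp, hlam]; linear_combination 2 * √2 * hu_sq
  rw [hgm_sub, hgp_sub, div_neg_add_div_eq_div_one_sub_sq _ _ hu.ne' (by linarith) (by linarith),
    hu_sq, sub_sub_cancel, funext hlam]
  convert hasDerivAt_const_mul_one_sub_sqrt_one_sub (3 * √2) ht₁ using 1
  field_simp
  rw [sq_sqrt zero_le_two]
end

section
/- For θ ∈ (0,π), θ ≠ π/2, set x_θ = −√( sin³θ / (sin θ − θ·cos θ) ), y_θ = √( sin³θ / (sin θ + (π−θ)·cos θ) ), and r(θ) = −x_θ / y_θ. Then the limit as θ → π/2 (through values θ ≠ π/2) of the ratio log( 2·√(r(θ)) / (1 + r(θ)) ) / log(sin θ) equals π²/16. Equivalently, the Loewner energy −8·log(2√r/(1+r)) of the energy-minimizing welding curve welding points of ratio r tends to (π/4)² times the energy −8·log(sin θ) of the Wang minimizer welding the same pair of points, as the ratio tends to 1. -/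
open Filter Topology Asymptotics Real

/-!
With `c = cos θ` and `q = (r - 1) / (r + 1)`, both logarithms are halves of logarithms of the
same shape: `2 log (sin θ) = log (1 - c²)` and `2 log (2√r / (1 + r)) = log (1 - q²)`. Since
`log (1 + t) ~ t`, the ratio behaves like `(q / c)²`. Near `π / 2`, `r = √(N / D)` with
`N = sin θ + (π - θ) cos θ` and `D = sin θ - θ cos θ`, so `(r² - 1) D = N - D = π c` and
`q / c = π / (D (r + 1)²) → π / 4`.
-/

theorem Real.log_isEquivalent_sub_one : log ~[𝓝 1] fun x => x - 1 := by
  have h := (hasDerivAt_log one_ne_zero).isLittleO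
  simp only [log_one, inv_one, smul_eq_mul, mul_one, sub_zero] at h
  exact h

theorem tendsto_log_one_sub_sq_div_log_one_sub_sq {α : Type*} {l : Filter α} {q c : α → ℝ}
    {L : ℝ} (hq : Tendsto q l (𝓝 0)) (hc : Tendsto c l (𝓝 0))
    (hqc : Tendsto (fun x => q x / c x) l (𝓝 L)) :
    Tendsto (fun x => log (1 - q x ^ 2) / log (1 - c x ^ 2)) l (𝓝 (L ^ 2)) := by
  have hlog {f : α → ℝ} (hf : Tendsto f l (𝓝 0)) :
      (fun x => log (1 - f x ^ 2)) ~[l] fun x => -f x ^ 2 := by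
    have h1 : Tendsto (fun x => 1 - f x ^ 2) l (𝓝 1) := by
      simpa using (hf.pow 2).const_sub 1
    exact (log_isEquivalent_sub_one.comp_tendsto h1).congr_right
      (Eventually.of_forall fun x => by simp)
  refine ((hlog hq).div (hlog hc)).symm.tendsto_nhds ?_
  simpa only [Pi.div_def, neg_div_neg_eq, div_pow] using hqc.pow 2

theorem sqrt_div_div_sqrt_div {a b : ℝ} (ha : 0 < a) (hb : 0 ≤ b) (d : ℝ) :
    √(a / b) / √(a / d) = √(d / b) := by
  rw [← sqrt_div (div_nonneg ha.le hb), div_div_div_cancel_left' _ _ ha.ne']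

theorem two_mul_log_two_mul_sqrt_div_one_add {r : ℝ} (hr : 0 ≤ r) :
    2 * log (2 * √r / (1 + r)) = log (1 - ((r - 1) / (r + 1)) ^ 2) := by
  rw [← Nat.cast_ofNat, ← log_pow]
  congr 1
  have : r + 1 ≠ 0 := by positivity
  field_simp
  rw [sq_sqrt hr]
  push_cast
  ring

theorem two_mul_log_sin (θ : ℝ) : 2 * log (sin θ) = log (1 - cos θ ^ 2) := by
  rw [← Nat.cast_ofNat, ← log_pow, ← sin_sq]

theorem sub_one_div_add_one_div_eq {r D c k : ℝ} (hr : 0 ≤ r) (hD : D ≠ 0) (hc : c ≠ 0)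
    (h : r ^ 2 * D = D + k * c) : (r - 1) / (r + 1) / c = k / (D * (r + 1) ^ 2) := by
  have : r + 1 ≠ 0 := by positivity
  field_simp
  linear_combination h

theorem tendsto_sin_sub_mul_cos :
    Tendsto (fun θ => sin θ - θ * cos θ) (𝓝 (π / 2)) (𝓝 1) := by
  simpa using (by fun_prop : Continuous fun θ => sin θ - θ * cos θ).tendsto (π / 2)

theorem tendsto_sin_add_pi_sub_mul_cos :
    Tendsto (fun θ => sin θ + (π - θ) * cos θ) (𝓝 (π / 2)) (𝓝 1) := by
  simpa using (by fun_prop : Continuous fun θ => sin θ + (π - θ) * cos θ).tendsto (π / 2)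

/-- Closed form of `r(θ) = -x_θ / y_θ` for `θ` near `π / 2`. -/
noncomputable def emwRatio (θ : ℝ) : ℝ :=
  √((sin θ + (π - θ) * cos θ) / (sin θ - θ * cos θ))

theorem emwRatio_nonneg (θ : ℝ) : 0 ≤ emwRatio θ := sqrt_nonneg _

theorem tendsto_emwRatio : Tendsto emwRatio (𝓝 (π / 2)) (𝓝 1) := by
  unfold emwRatio
  simpa using (tendsto_sin_add_pi_sub_mul_cos.div tendsto_sin_sub_mul_cos one_ne_zero).sqrt

theorem tendsto_emwRatio_sub_one_div_cos :
    Tendsto (fun θ => (emwRatio θ - 1) / (emwRatio θ + 1) / cos θ) (𝓝[≠] (π / 2))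
      (𝓝 (π / 4)) := by
  have h := tendsto_const_nhds (x := π).div
    (tendsto_sin_sub_mul_cos.mul ((tendsto_emwRatio.add_const 1).pow 2)) (by norm_num)
  norm_num at h
  refine (h.mono_left nhdsWithin_le_nhds).congr' ?_
  filter_upwards [eventually_nhdsWithin_of_eventually_nhds
      (tendsto_sin_sub_mul_cos.eventually (lt_mem_nhds one_pos)),
    eventually_nhdsWithin_of_eventually_nhds
      (tendsto_sin_add_pi_sub_mul_cos.eventually (lt_mem_nhds one_pos)),
    (hasDerivAt_cos (π / 2)).eventually_ne (c := 0) (by simp)] with θ hD hN hc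
  refine (sub_one_div_add_one_div_eq (emwRatio_nonneg θ) hD.ne' hc ?_).symm
  rw [emwRatio, sq_sqrt (div_nonneg hN.le hD.le), div_mul_cancel₀ _ hD.ne']
  ring

/-- With `x_θ = −√(sin³θ/(sin θ − θ cos θ))`,
`y_θ = √(sin³θ/(sin θ + (π−θ)cos θ))` and `r(θ) = −x_θ/y_θ`, the ratio
`log(2√(r(θ))/(1+r(θ))) / log(sin θ)` tends to `π²/16` as `θ → π/2` through values
`θ ≠ π/2`: the EMW energy is asymptotically `(π/4)²` times the Wang energy for curves
welding the same pair of points. -/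
theorem emw_wang_energy_ratio_welding (xw yw r : ℝ → ℝ)
    (hx : ∀ θ : ℝ, xw θ = -Real.sqrt (Real.sin θ ^ 3 / (Real.sin θ - θ * Real.cos θ)))
    (hy : ∀ θ : ℝ, yw θ =
      Real.sqrt (Real.sin θ ^ 3 / (Real.sin θ + (Real.pi - θ) * Real.cos θ)))
    (hr : ∀ θ : ℝ, r θ = -(xw θ) / yw θ) :
    Tendsto (fun θ => Real.log (2 * Real.sqrt (r θ) / (1 + r θ)) / Real.log (Real.sin θ))
      (nhdsWithin (Real.pi/2) {Real.pi/2}ᶜ) (nhds (Real.pi^2 / 16)) := by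
  have hsin : Tendsto sin (𝓝 (π / 2)) (𝓝 1) := by simpa using continuous_sin.tendsto (π / 2)
  have hcos : Tendsto cos (𝓝[≠] (π / 2)) (𝓝 0) := by
    simpa using (continuous_cos.tendsto (π / 2)).mono_left nhdsWithin_le_nhds
  have hr_eq : ∀ᶠ θ in 𝓝[≠] (π / 2), r θ = emwRatio θ := by
    filter_upwards [eventually_nhdsWithin_of_eventually_nhds
        (hsin.eventually (lt_mem_nhds one_pos)),
      eventually_nhdsWithin_of_eventually_nhds
        (tendsto_sin_sub_mul_cos.eventually (lt_mem_nhds one_pos))] with θ hs hD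
    rw [hr, hx, hy, neg_neg, sqrt_div_div_sqrt_div (by positivity) hD.le, emwRatio]
  have hq :
      Tendsto (fun θ => (emwRatio θ - 1) / (emwRatio θ + 1)) (𝓝[≠] (π / 2)) (𝓝 0) := by
    simpa [Pi.div_def] using ((tendsto_emwRatio.sub_const 1).div
      (tendsto_emwRatio.add_const 1) (by norm_num)).mono_left nhdsWithin_le_nhds
  have h := tendsto_log_one_sub_sq_div_log_one_sub_sq hq hcos tendsto_emwRatio_sub_one_div_cos
  rw [div_pow, show (4 : ℝ) ^ 2 = 16 by norm_num] at h
  refine h.congr' ?_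
  filter_upwards [hr_eq] with θ hrθ
  rw [hrθ, ← two_mul_log_two_mul_sqrt_div_one_add (emwRatio_nonneg θ), ← two_mul_log_sin,
    mul_div_mul_left _ _ two_ne_zero]
end

section
/- For r ∈ (0,1) define β(r) = (3π/4) − (1/2)·arctan( (2(1+r) + (1−r)·log r) / (π·(1−r)) ). Then the limit as r → 1⁻ of the ratio log( 2·√r / (1+r) ) / log( sin(β(r)) ) equals 16/π². Equivalently, the Loewner energy −8·log(2√r/(1+r)) of the energy-minimizing welding curve with welding-endpoint ratio r tends to (4/π)² times the energy −8·log(sin β(r)) of the Wang minimizer with tip of the same argument β(r), as r → 1⁻. -/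
/-!
Write `ε = 1 - r`. Since `((1 + r) / (2√r))² = 1 + ε² / (4r)`, the numerator is
`-½ log (1 + ε² / (4r)) ~ -ε² / 8`. Since `arctan A = π/2 - arctan A⁻¹` for `A > 0`, the tip
argument is `β(r) = π/2 + δ` with `δ = ½ arctan (π ε / (2(1 + r) + ε log r)) ~ π ε / 8`, so
`log sin β(r) = log cos δ = ½ log (1 - sin² δ) ~ -δ² / 2 ~ -π² ε² / 128`. Each `~` is a first-order
expansion `φ (f x) / g x → φ'(0) · lim f / g` for `φ(0) = 0` and `f → 0`, applied to
`φ = log (1 + ·)`, `sin` and `arctan`.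
-/

open Set Filter Real Topology

theorem Real.hasDerivAt_log_one_add_zero : HasDerivAt (fun t : ℝ => log (1 + t)) 1 0 := by
  simpa using ((hasDerivAt_id (0 : ℝ)).const_add 1).log (by norm_num)

theorem Real.log_cos_eq_half_log_one_sub_sin_sq (x : ℝ) :
    log (cos x) = log (1 - sin x ^ 2) / 2 := by
  rw [← cos_sq', Real.log_pow]; ring

section

variable {α : Type*} {l : Filter α}

theorem HasDerivAt.tendsto_comp_div {φ : ℝ → ℝ} {φ' c : ℝ} {f g : α → ℝ}
    (hφ : HasDerivAt φ φ' 0) (hφ0 : φ 0 = 0) (hf : Tendsto f l (𝓝[≠] 0))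
    (hfg : Tendsto (fun x => f x / g x) l (𝓝 c)) :
    Tendsto (fun x => φ (f x) / g x) l (𝓝 (φ' * c)) := by
  refine (((hasDerivAt_iff_tendsto_slope.mp hφ).comp hf).mul hfg).congr' ?_
  filter_upwards [(tendsto_nhdsWithin_iff.mp hf).2] with x (hx : f x ≠ 0)
  simp only [Function.comp_apply, slope_fun_def, hφ0, sub_zero, vsub_eq_sub, smul_eq_mul]
  field_simp

theorem tendsto_nhdsNE_zero_of_tendsto_div {f g : α → ℝ} {c : ℝ}
    (hg : Tendsto g l (𝓝[≠] 0)) (hfg : Tendsto (fun x => f x / g x) l (𝓝 c)) (hc : c ≠ 0) :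
    Tendsto f l (𝓝[≠] 0) := by
  obtain ⟨hg0, hgne⟩ := tendsto_nhdsWithin_iff.mp hg
  refine tendsto_nhdsWithin_iff.mpr ⟨?_, ?_⟩
  · refine (mul_zero c ▸ hfg.mul hg0).congr' ?_
    filter_upwards [hgne] with x (hx : g x ≠ 0)
    field_simp
  · filter_upwards [hfg.eventually_ne hc] with x hx
    rintro (h : f x = 0)
    simp [h] at hx

theorem tendsto_pow_nhdsNE_zero {g : α → ℝ} {n : ℕ} (hn : n ≠ 0)
    (hg : Tendsto g l (𝓝[≠] 0)) : Tendsto (fun x => g x ^ n) l (𝓝[≠] 0) := by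
  obtain ⟨hg0, hgne⟩ := tendsto_nhdsWithin_iff.mp hg
  refine tendsto_nhdsWithin_iff.mpr ⟨by simpa [zero_pow hn] using hg0.pow n, ?_⟩
  filter_upwards [hgne] with x hx using pow_ne_zero n hx

theorem Filter.Tendsto.log_cos_div_sq {δ g : α → ℝ} {c : ℝ}
    (hδ : Tendsto (fun x => δ x / g x) l (𝓝 c)) (hg : Tendsto g l (𝓝[≠] 0)) (hc : c ≠ 0) :
    Tendsto (fun x => Real.log (cos (δ x)) / g x ^ 2) l (𝓝 (-c ^ 2 / 2)) := by
  have hsin : Tendsto (fun x => sin (δ x) / g x) l (𝓝 c) := by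
    simpa using (hasDerivAt_sin 0).tendsto_comp_div sin_zero
      (tendsto_nhdsNE_zero_of_tendsto_div hg hδ hc) hδ
  have hf : Tendsto (fun x => -sin (δ x) ^ 2 / g x ^ 2) l (𝓝 (-c ^ 2)) := by
    simpa [div_pow, neg_div] using (hsin.pow 2).neg
  have hlog := hasDerivAt_log_one_add_zero.tendsto_comp_div (by simp)
    (tendsto_nhdsNE_zero_of_tendsto_div (tendsto_pow_nhdsNE_zero two_ne_zero hg) hf
      (neg_ne_zero.mpr (pow_ne_zero 2 hc))) hf
  refine ((one_mul (-c ^ 2) ▸ hlog).div_const 2).congr fun x => ?_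
  rw [log_cos_eq_half_log_one_sub_sin_sq, sub_eq_add_neg]
  ring

end

theorem tendsto_one_sub_nhdsNE : Tendsto (fun r : ℝ => 1 - r) (𝓝[≠] 1) (𝓝[≠] 0) := by
  refine tendsto_nhdsWithin_iff.mpr ⟨?_, ?_⟩
  · have : ContinuousWithinAt (fun r : ℝ => 1 - r) {1}ᶜ 1 := by fun_prop
    simpa using this.tendsto
  · filter_upwards [self_mem_nhdsWithin] with r (hr : r ≠ 1)
    exact sub_ne_zero.mpr hr.symm

theorem Real.log_two_mul_sqrt_div_one_add {r : ℝ} (hr : 0 < r) :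
    log (2 * √r / (1 + r)) = -(log (1 + (1 - r) ^ 2 / (4 * r)) / 2) := by
  have hsq : (2 * √r / (1 + r)) ^ 2 = (1 + (1 - r) ^ 2 / (4 * r))⁻¹ := by
    rw [div_pow, mul_pow, sq_sqrt hr.le]
    field_simp
    ring
  have := congrArg log hsq
  rw [Real.log_pow, Real.log_inv] at this
  linarith

theorem tendsto_log_two_mul_sqrt_div_one_add_div_sq :
    Tendsto (fun r => log (2 * √r / (1 + r)) / (1 - r) ^ 2) (𝓝[≠] 1) (𝓝 (-1 / 8)) := by
  have hg := tendsto_pow_nhdsNE_zero two_ne_zero tendsto_one_sub_nhdsNE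
  have hpos : ∀ᶠ r in 𝓝[≠] (1 : ℝ), 0 < r :=
    eventually_nhdsWithin_of_eventually_nhds (eventually_gt_nhds one_pos)
  have hfg : Tendsto (fun r : ℝ => (1 - r) ^ 2 / (4 * r) / (1 - r) ^ 2) (𝓝[≠] 1) (𝓝 (1 / 4)) := by
    have : Tendsto (fun r : ℝ => 1 / (4 * r)) (𝓝 1) (𝓝 (1 / (4 * 1))) :=
      tendsto_const_nhds.div (tendsto_id.const_mul 4) (by norm_num)
    refine (mul_one (4 : ℝ) ▸ this.mono_left nhdsWithin_le_nhds).congr' ?_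
    filter_upwards [(tendsto_nhdsWithin_iff.mp hg).2] with r (hr : (1 - r) ^ 2 ≠ 0)
    rw [div_right_comm, div_self hr]
  have hlog := hasDerivAt_log_one_add_zero.tendsto_comp_div (by simp)
    (tendsto_nhdsNE_zero_of_tendsto_div hg hfg (by norm_num)) hfg
  refine (by norm_num : -(1 * (1 / 4) / 2 : ℝ) = -1 / 8) ▸ (hlog.div_const 2).neg |>.congr' ?_
  filter_upwards [hpos] with r hr
  rw [log_two_mul_sqrt_div_one_add hr]
  ring

theorem Real.sin_three_pi_div_four_sub_half_arctan {a b : ℝ} (ha : 0 < a) (hb : 0 < b) :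
    sin (3 * π / 4 - 1 / 2 * arctan (a / b)) = cos (arctan (b / a) / 2) := by
  rw [← inv_div b, arctan_inv_of_pos (div_pos hb ha), ← sin_add_pi_div_two]
  ring_nf

theorem tendsto_two_mul_one_add_add_one_sub_mul_log :
    Tendsto (fun r => 2 * (1 + r) + (1 - r) * log r) (𝓝 1) (𝓝 4) := by
  have : ContinuousAt (fun r => 2 * (1 + r) + (1 - r) * log r) 1 := by
    fun_prop (disch := norm_num)
  simpa [show (2 : ℝ) * (1 + 1) = 4 by norm_num] using this.tendsto

theorem tendsto_arctan_div_two_div_one_sub :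
    Tendsto (fun r => arctan (π * (1 - r) / (2 * (1 + r) + (1 - r) * log r)) / 2 / (1 - r))
      (𝓝[≠] 1) (𝓝 (π / 8)) := by
  have hfg : Tendsto (fun r => π * (1 - r) / (2 * (1 + r) + (1 - r) * log r) / (1 - r))
      (𝓝[≠] 1) (𝓝 (π / 4)) := by
    refine ((tendsto_const_nhds.div tendsto_two_mul_one_add_add_one_sub_mul_log
      four_ne_zero).mono_left nhdsWithin_le_nhds).congr' ?_
    filter_upwards [(tendsto_nhdsWithin_iff.mp tendsto_one_sub_nhdsNE).2]
      with r (hr : 1 - r ≠ 0)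
    rw [Pi.div_apply, mul_div_right_comm, mul_div_assoc, div_self hr, mul_one]
  have harctan := (hasDerivAt_arctan 0).tendsto_comp_div arctan_zero
    (tendsto_nhdsNE_zero_of_tendsto_div tendsto_one_sub_nhdsNE hfg (by positivity)) hfg
  refine (by norm_num; ring : 1 / (1 + 0 ^ 2) * (π / 4) / 2 = π / 8) ▸ harctan.div_const 2
    |>.congr fun r => ?_
  ring

/-- With
`β(r) = 3π/4 − (1/2)·arctan((2(1+r) + (1−r)log r)/(π(1−r)))` (the argument of the tip
of the EMW curve with welding-endpoint ratio `r`), the ratio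
`log(2√r/(1+r)) / log(sin β(r))` tends to `16/π²` as `r → 1⁻`: the EMW welding energy
is asymptotically `(4/π)²` times the Wang energy for curves with tip of the same
argument. -/
theorem emw_wang_energy_ratio_tip (β : ℝ → ℝ)
    (hβ : ∀ r : ℝ, β r = 3*Real.pi/4 -
      (1/2) * Real.arctan ((2*(1+r) + (1-r)*Real.log r) / (Real.pi*(1-r)))) :
    Tendsto (fun r => Real.log (2*Real.sqrt r/(1+r)) / Real.log (Real.sin (β r)))
      (nhdsWithin 1 (Iio 1)) (nhds (16 / Real.pi^2)) := by
  have hl := nhdsLT_le_nhdsNE (1 : ℝ)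
  have hnum := tendsto_log_two_mul_sqrt_div_one_add_div_sq.mono_left hl
  have hden := (tendsto_arctan_div_two_div_one_sub.mono_left hl).log_cos_div_sq
    (tendsto_one_sub_nhdsNE.mono_left hl) (by positivity)
  have hlim := hnum.div hden (by simp [pi_ne_zero])
  rw [show (-1 / 8 : ℝ) / (-(π / 8) ^ 2 / 2) = 16 / π ^ 2 by field_simp; ring] at hlim
  refine hlim.congr' ?_
  have hD : ∀ᶠ r in 𝓝[<] (1 : ℝ), 0 < 2 * (1 + r) + (1 - r) * log r :=
    eventually_nhdsWithin_of_eventually_nhds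
      (tendsto_two_mul_one_add_add_one_sub_mul_log.eventually (eventually_gt_nhds four_pos))
  filter_upwards [self_mem_nhdsWithin, hD] with r (hr : r < 1) hDr
  have hr' : 0 < 1 - r := sub_pos.mpr hr
  rw [hβ, sin_three_pi_div_four_sub_half_arctan hDr (by positivity)]
  exact div_div_div_cancel_right₀ (by positivity) _ _
end
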